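/- arXiv:1103.6205 — 5 statements merged into one kernel-verified Lean document; each statement's English description precedes it below -/
import Mathlib

section
/- Let n ≥ 2 and s ∈ (0,1). Let f : ℝⁿ → ℝ be measurable and compactly supported. Then ‖f‖²_{L^{2n/(n−2s)}(ℝⁿ)} ≤ C(n,s) ∫_{ℝⁿ}∫_{ℝⁿ} |f(x)−f(y)|²/|x−y|^{n+2s} dx dy for a suitable constant C(n,s) > 0 depending only on n and s. -/
/-!
Level-set proof. Let `a k = μ {|f| > 2 ^ k}` and `θ = 2s/n`, so that `2/p = 1 - θ` for
`p = 2n/(n - 2s)`. Cutting `|f|` into the dyadic shells `{2 ^ k < |f| ≤ 2 ^ (k+1)}` and using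
`∑ xᵢ ^ q ≤ (∑ xᵢ) ^ q` gives `‖f‖ₚ² ≤ 4 ∑ 4 ^ k a_k ^ (1-θ)`.

Comparing `a k` with `ε a (k-1)` for a suitable `ε`, either `a_k ^ (1-θ) ≲ a_k a_(k-1) ^ (-θ)`
or the `k`-th term is at most half the previous one; the latter part is absorbed, so
`∑ 4 ^ k a_k ^ (1-θ) ≲ ∑ 4 ^ k a_k ^ (-θ) a_(k+1)`. Writing `a_(k+1)` as the sum of the
measures of the shells above `2 ^ (k+1)`, whose weights `4 ^ k a_k ^ (-θ)` grow geometrically,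
this is `≲ ∑ 4 ^ k a_k ^ (-θ) μ(shell (k+1))`.

Finally, if `x` lies in shell `k+1` and `|f y| ≤ 2 ^ k` then `|f x - f y| ≥ 2 ^ k`, and
`∫ |x - y| ^ (-n-2s) dy` over the complement of a set of measure `a` is at least
`c a ^ (-θ)`: half of the ball of measure `2a` around `x` lies in that complement. Hence the
energy of `f` restricted to `x` in shell `k+1` is at least `c 4 ^ k a_k ^ (-θ) μ(shell (k+1))`.
-/

open MeasureTheory Set Filter Metric Module
open scoped ENNReal NNReal Topology Function

namespace ENNReal

lemma rpow_le_rpow_of_nonpos {x y : ℝ≥0∞} {z : ℝ} (hxy : x ≤ y) (hz : z ≤ 0) :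
    y ^ z ≤ x ^ z := by
  rw [← neg_neg z, rpow_neg y, rpow_neg x]
  exact ENNReal.inv_le_inv.2 (rpow_le_rpow hxy (neg_nonneg.2 hz))

lemma tsum_rpow_le_rpow_tsum {ι : Type*} (x : ι → ℝ≥0∞) {q : ℝ} (hq : 1 ≤ q) :
    ∑' i, x i ^ q ≤ (∑' i, x i) ^ q := by
  have split (y : ℝ≥0∞) : y ^ q = y * y ^ (q - 1) := by
    have := rpow_add_of_nonneg (x := y) 1 (q - 1) zero_le_one (by linarith)
    rwa [add_sub_cancel, rpow_one] at this
  calc ∑' i, x i ^ q = ∑' i, x i * x i ^ (q - 1) := by simp_rw [← split]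
    _ ≤ ∑' i, x i * (∑' j, x j) ^ (q - 1) := by
      gcongr with i
      exact ENNReal.le_tsum i
    _ = (∑' i, x i) ^ q := by rw [ENNReal.tsum_mul_right, split]

lemma tendsto_zpow_atBot_zero {b : ℝ≥0∞} (hb : 1 < b) :
    Tendsto (fun k : ℤ ↦ b ^ k) atBot (𝓝 0) := by
  have hinv : Tendsto (fun n : ℕ ↦ b⁻¹ ^ n) atTop (𝓝 0) :=
    tendsto_pow_atTop_nhds_zero_of_lt_one (ENNReal.inv_lt_one.2 hb)
  rw [ENNReal.tendsto_nhds_zero]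
  intro ε hε
  obtain ⟨N, hN⟩ := eventually_atTop.1 (ENNReal.tendsto_nhds_zero.1 hinv ε hε)
  filter_upwards [eventually_le_atBot (-(N : ℤ))] with k hk
  calc b ^ k ≤ b ^ (-(N : ℤ)) := zpow_le_of_le hb.le hk
    _ = b⁻¹ ^ N := by rw [ENNReal.zpow_neg, zpow_natCast, ENNReal.inv_pow]
    _ ≤ ε := hN N le_rfl

lemma rpow_one_sub_le {θ : ℝ} (hθ0 : 0 ≤ θ) (hθ1 : θ < 1) {x : ℝ≥0∞} (hx : x ≠ ∞)
    (y : ℝ≥0∞) {ε : ℝ≥0∞} (hε0 : ε ≠ 0) (hε : ε ≠ ∞) :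
    x ^ (1 - θ) ≤ ε ^ (-θ) * x * y ^ (-θ) + ε ^ (1 - θ) * y ^ (1 - θ) := by
  rcases le_or_gt (ε * y) x with hxy | hxy
  · refine le_add_right ?_
    rcases eq_or_ne x 0 with rfl | hx0
    · rw [zero_rpow_of_pos (by linarith)]
      exact zero_le
    have hy : y ≠ ∞ := fun hy ↦ hx (top_unique (by simpa [hy, hε0] using hxy))
    calc x ^ (1 - θ) = x * x ^ (-θ) := by rw [sub_eq_add_neg, rpow_add _ _ hx0 hx, rpow_one]
      _ ≤ x * (ε * y) ^ (-θ) := mul_le_mul_right (rpow_le_rpow_of_nonpos hxy (by linarith)) x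
      _ = ε ^ (-θ) * x * y ^ (-θ) := by rw [mul_rpow_of_ne_top hε hy]; ring
  · refine le_add_left ?_
    rw [← mul_rpow_of_nonneg _ _ (by linarith)]
    exact rpow_le_rpow hxy.le (by linarith)

lemma four_zpow_eq_sq (k : ℤ) : (4 : ℝ≥0∞) ^ k = (2 ^ k) ^ 2 := by
  rw [← coe_ofNat, ← coe_ofNat, ← coe_zpow (by norm_num), ← coe_zpow (by norm_num), ← coe_pow,
    ← zpow_natCast, ← zpow_mul, mul_comm, zpow_mul]
  norm_num

lemma pairwise_disjoint_Ioc_zpow {y : ℝ≥0∞} (hy : 1 ≤ y) :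
    Pairwise (Disjoint on fun k : ℤ ↦ Ioc (y ^ k) (y ^ (k + 1))) := by
  intro j k hjk
  wlog h : j < k generalizing j k
  · exact (this hjk.symm (lt_of_le_of_ne (not_lt.1 h) hjk.symm)).symm
  exact Set.disjoint_left.2 fun t htj htk ↦
    (htk.1.trans_le htj.2).not_ge (zpow_le_of_le hy (by omega))

lemma Ioo_zpow_top_eq_iUnion_Ioc {y : ℝ≥0∞} (hy : 1 < y) (hy' : y ≠ ∞) (k : ℤ) :
    Ioo (y ^ k) ∞ = ⋃ m : ℕ, Ioc (y ^ (k + m)) (y ^ (k + m + 1)) := by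
  have hy0 : y ≠ 0 := (zero_lt_one.trans hy).ne'
  ext t
  simp only [mem_Ioo, mem_iUnion, mem_Ioc]
  constructor
  · rintro ⟨hkt, ht⟩
    obtain ⟨j, hjt, htj⟩ := exists_mem_Ioc_zpow (pos_of_gt hkt).ne' ht.ne hy hy'
    have hkj : k ≤ j := by
      by_contra! hjk
      exact (hkt.trans_le htj).not_ge (zpow_le_of_le hy.le (by omega))
    refine ⟨(j - k).toNat, ?_⟩
    rw [show k + ((j - k).toNat : ℤ) = j by omega]
    exact ⟨hjt, htj⟩
  · rintro ⟨m, hmt, htm⟩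
    exact ⟨(zpow_le_of_le hy.le (by omega)).trans_lt hmt, htm.trans_lt (zpow_lt_top hy0 hy' _)⟩

end ENNReal

theorem tsum_le_two_mul_tsum_of_le_add_half {b c : ℤ → ℝ≥0∞} (hb : Tendsto b atBot (𝓝 0))
    (h : ∀ k, b k ≤ c k + 2⁻¹ * b (k - 1)) :
    ∑' k, b k ≤ 2 * ∑' k, c k := by
  have iterate (n : ℕ) (k : ℤ) :
      b k ≤ ∑ j ∈ Finset.range n, 2⁻¹ ^ j * c (k - j) + 2⁻¹ ^ n * b (k - n) := by
    induction n with
    | zero => simp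
    | succ n ih =>
      calc b k ≤ _ := ih
        _ ≤ ∑ j ∈ Finset.range n, 2⁻¹ ^ j * c (k - j)
              + 2⁻¹ ^ n * (c (k - n) + 2⁻¹ * b (k - n - 1)) := by gcongr; exact h _
        _ = _ := by rw [Finset.sum_range_succ]; push_cast; ring_nf
  have remainder (k : ℤ) :
      Tendsto (fun n : ℕ ↦ (2⁻¹ : ℝ≥0∞) ^ n * b (k - n)) atTop (𝓝 0) := by
    have hk : Tendsto (fun n : ℕ ↦ b (k - n)) atTop (𝓝 0) :=
      hb.comp (tendsto_atTop_atBot.2 fun j ↦ ⟨(k - j).toNat, fun n hn ↦ by omega⟩)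
    refine tendsto_of_tendsto_of_tendsto_of_le_of_le tendsto_const_nhds hk (fun _ ↦ zero_le)
      fun n ↦ mul_le_of_le_one_left' (pow_le_one₀ zero_le (by norm_num))
  have pointwise (k : ℤ) : b k ≤ ∑' j : ℕ, 2⁻¹ ^ j * c (k - j) := by
    have := (ENNReal.tendsto_nat_tsum fun j : ℕ ↦ 2⁻¹ ^ j * c (k - j)).add (remainder k)
    rw [add_zero] at this
    exact ge_of_tendsto' this (iterate · k)
  calc ∑' k, b k ≤ ∑' k, ∑' j : ℕ, 2⁻¹ ^ j * c (k - j) := ENNReal.tsum_le_tsum pointwise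
    _ = ∑' j : ℕ, 2⁻¹ ^ j * ∑' k, c k := by
      rw [ENNReal.tsum_comm]
      congr 1 with j
      rw [ENNReal.tsum_mul_left]
      exact congrArg _ ((Equiv.subRight (j : ℤ)).tsum_eq c)
    _ = 2 * ∑' k, c k := by
      rw [ENNReal.tsum_mul_right, ENNReal.tsum_geometric, ENNReal.one_sub_inv_two, inv_inv]

theorem tsum_zpow_mul_rpow_le {θ : ℝ} (hθ0 : 0 ≤ θ) (hθ1 : θ < 1) {b : ℝ≥0∞} (hb : 1 < b)
    (hb' : b ≠ ∞) {a : ℤ → ℝ≥0∞} {M : ℝ≥0∞} (hM : M ≠ ∞) (haM : ∀ k, a k ≤ M) :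
    ∑' k, b ^ k * a k ^ (1 - θ) ≤
      (2 * b) ^ (1 - θ)⁻¹ * ∑' k, b ^ k * a k ^ (-θ) * a (k + 1) := by
  have hb0 : b ≠ 0 := (zero_lt_one.trans hb).ne'
  have h2b0 : 2 * b ≠ 0 := mul_ne_zero two_ne_zero hb0
  have h2b : 2 * b ≠ ∞ := ENNReal.mul_ne_top ENNReal.ofNat_ne_top hb'
  -- chosen so that `b * ε ^ (1 - θ) = 1 / 2`: in the sparse case the terms halve
  set ε := (2 * b) ^ (-(1 - θ)⁻¹)
  have hε0 : ε ≠ 0 := by simp [ε, ENNReal.rpow_eq_zero_iff, h2b0, h2b]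
  have hε : ε ≠ ∞ := by simp [ε, ENNReal.rpow_eq_top_iff, h2b0, h2b]
  have hεpow : ε ^ (1 - θ) = (2 * b)⁻¹ := by
    rw [← ENNReal.rpow_mul, neg_mul, inv_mul_cancel₀ (by linarith), ENNReal.rpow_neg_one]
  have hconst : 2 * (b * ε ^ (-θ)) = (2 * b) ^ (1 - θ)⁻¹ := by
    have hεθ : ε ^ (-θ) = (2 * b) ^ ((1 - θ)⁻¹ - 1) := by
      have : 1 - θ ≠ 0 := by linarith
      rw [← ENNReal.rpow_mul]
      congr 1
      field_simp
      ring
    calc 2 * (b * ε ^ (-θ)) = (2 * b) ^ (1 : ℝ) * (2 * b) ^ ((1 - θ)⁻¹ - 1) := by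
          rw [ENNReal.rpow_one, hεθ, mul_assoc]
      _ = (2 * b) ^ (1 - θ)⁻¹ := by rw [← ENNReal.rpow_add _ _ h2b0 h2b, add_sub_cancel]
  have step (k : ℤ) : b ^ k * a k ^ (1 - θ) ≤
      b * ε ^ (-θ) * (b ^ (k - 1) * a (k - 1) ^ (-θ) * a (k - 1 + 1)) +
        2⁻¹ * (b ^ (k - 1) * a (k - 1) ^ (1 - θ)) := by
    have hk : b ^ k = b * b ^ (k - 1) := by
      have := ENNReal.zpow_add hb0 hb' 1 (k - 1)
      rwa [add_sub_cancel, zpow_one] at this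
    have hhalf : b * (2 * b)⁻¹ = 2⁻¹ := by
      rw [ENNReal.mul_inv (Or.inl two_ne_zero) (Or.inr hb0), mul_left_comm,
        ENNReal.mul_inv_cancel hb0 hb', mul_one]
    calc b ^ k * a k ^ (1 - θ)
        ≤ b ^ k * (ε ^ (-θ) * a k * a (k - 1) ^ (-θ) + ε ^ (1 - θ) * a (k - 1) ^ (1 - θ)) :=
          mul_le_mul_right (ENNReal.rpow_one_sub_le hθ0 hθ1 (ne_top_of_le_ne_top hM (haM k)) _
            hε0 hε) _
      _ = _ := by rw [hεpow, hk, sub_add_cancel, ← hhalf]; ring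
  have hlim : Tendsto (fun k ↦ b ^ k * a k ^ (1 - θ)) atBot (𝓝 0) := by
    have hM' : Tendsto (fun k : ℤ ↦ b ^ k * M ^ (1 - θ)) atBot (𝓝 0) := by
      simpa using ENNReal.Tendsto.mul_const (ENNReal.tendsto_zpow_atBot_zero hb)
        (Or.inr (ENNReal.rpow_ne_top_of_nonneg (by linarith) hM))
    refine tendsto_of_tendsto_of_tendsto_of_le_of_le tendsto_const_nhds hM' (fun _ ↦ zero_le)
      fun k ↦ mul_le_mul_right (ENNReal.rpow_le_rpow (haM k) (by linarith)) _
  calc ∑' k, b ^ k * a k ^ (1 - θ)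
      ≤ 2 * ∑' k, b * ε ^ (-θ) * (b ^ (k - 1) * a (k - 1) ^ (-θ) * a (k - 1 + 1)) :=
        tsum_le_two_mul_tsum_of_le_add_half hlim step
    _ = (2 * b) ^ (1 - θ)⁻¹ * ∑' k, b ^ k * a k ^ (-θ) * a (k + 1) := by
      rw [ENNReal.tsum_mul_left, ← mul_assoc, hconst]
      congr 1
      exact (Equiv.subRight (1 : ℤ)).tsum_eq fun k ↦ b ^ k * a k ^ (-θ) * a (k + 1)

theorem tsum_mul_tsum_add_le {w d : ℤ → ℝ≥0∞} {r : ℝ≥0∞} (hw : ∀ k, w k ≤ r * w (k + 1)) :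
    ∑' k, w k * ∑' m : ℕ, d (k + m) ≤ (1 - r)⁻¹ * ∑' k, w k * d k := by
  have hw' (k : ℤ) (m : ℕ) : w k ≤ r ^ m * w (k + m) := by
    induction m with
    | zero => simp
    | succ m ih =>
      calc w k ≤ r ^ m * w (k + m) := ih
        _ ≤ r ^ m * (r * w (k + m + 1)) := by gcongr; exact hw _
        _ = r ^ (m + 1) * w (k + (m + 1 : ℕ)) := by push_cast; ring_nf
  calc ∑' k, w k * ∑' m : ℕ, d (k + m) = ∑' k, ∑' m : ℕ, w k * d (k + m) := by
        simp_rw [ENNReal.tsum_mul_left]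
    _ ≤ ∑' k, ∑' m : ℕ, r ^ m * (w (k + m) * d (k + m)) := by
        refine ENNReal.tsum_le_tsum fun k ↦ ENNReal.tsum_le_tsum fun m ↦ ?_
        rw [← mul_assoc]
        exact mul_le_mul_left (hw' k m) _
    _ = ∑' m : ℕ, r ^ m * ∑' k, w k * d k := by
        rw [ENNReal.tsum_comm]
        congr 1 with m
        rw [ENNReal.tsum_mul_left]
        exact congrArg _ ((Equiv.addRight (m : ℤ)).tsum_eq fun k ↦ w k * d k)
    _ = (1 - r)⁻¹ * ∑' k, w k * d k := by rw [ENNReal.tsum_mul_right, ENNReal.tsum_geometric]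

lemma pairwise_disjoint_preimage_Ioc_zpow {α : Type*} (g : α → ℝ≥0∞) :
    Pairwise (Disjoint on fun k : ℤ ↦ g ⁻¹' Ioc (2 ^ k) (2 ^ (k + 1))) :=
  fun _ _ hjk ↦ (ENNReal.pairwise_disjoint_Ioc_zpow one_le_two hjk).preimage g

section LevelSets

variable {α : Type*} [MeasurableSpace α] {μ : Measure α} {g : α → ℝ≥0∞}

def distribution (μ : Measure α) (g : α → ℝ≥0∞) (t : ℝ≥0∞) : ℝ≥0∞ := μ {x | t < g x}

lemma distribution_antitone (μ : Measure α) (g : α → ℝ≥0∞) : Antitone (distribution μ g) :=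
  fun _ _ hst ↦ measure_mono fun _ hx ↦ hst.trans_lt hx

lemma distribution_zpow_eq_tsum (hg : Measurable g) (hg_top : ∀ x, g x ≠ ∞) (k : ℤ) :
    distribution μ g (2 ^ k) = ∑' m : ℕ, μ (g ⁻¹' Ioc (2 ^ (k + m)) (2 ^ (k + m + 1))) := by
  have hset : {x | 2 ^ k < g x} = ⋃ m : ℕ, g ⁻¹' Ioc (2 ^ (k + m)) (2 ^ (k + m + 1)) := by
    rw [← preimage_iUnion,
      ← ENNReal.Ioo_zpow_top_eq_iUnion_Ioc ENNReal.one_lt_two ENNReal.ofNat_ne_top]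
    ext x
    simp [(hg_top x).lt_top]
  rw [distribution, hset, measure_iUnion _ fun m ↦ hg measurableSet_Ioc]
  exact (pairwise_disjoint_preimage_Ioc_zpow g).comp_of_injective fun m n h ↦ by simpa using h

theorem lintegral_rpow_le_tsum (hg : Measurable g) (hg_top : ∀ x, g x ≠ ∞) {p : ℝ}
    (hp : 0 < p) :
    ∫⁻ x, g x ^ p ∂μ ≤ 2 ^ p * ∑' k : ℤ, (2 ^ k) ^ p * distribution μ g (2 ^ k) := by
  set S : ℤ → Set α := fun k ↦ g ⁻¹' Ioc (2 ^ k) (2 ^ (k + 1))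
  set h : ℤ → α → ℝ≥0∞ := fun k ↦ (S k).indicator fun _ ↦ (2 ^ (k + 1)) ^ p
  have hS (k : ℤ) : MeasurableSet (S k) := hg measurableSet_Ioc
  have pointwise (x : α) : g x ^ p ≤ ∑' k, h k x := by
    rcases eq_or_ne (g x) 0 with h0 | h0
    · simp [h0, ENNReal.zero_rpow_of_pos hp]
    obtain ⟨k, hk⟩ :=
      ENNReal.exists_mem_Ioc_zpow h0 (hg_top x) ENNReal.one_lt_two ENNReal.ofNat_ne_top
    calc g x ^ p ≤ (2 ^ (k + 1)) ^ p := ENNReal.rpow_le_rpow hk.2 hp.le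
      _ = h k x := (indicator_of_mem (show x ∈ S k from hk) fun _ ↦ (2 ^ (k + 1)) ^ p).symm
      _ ≤ ∑' k, h k x := ENNReal.le_tsum k
  calc ∫⁻ x, g x ^ p ∂μ ≤ ∫⁻ x, ∑' k, h k x ∂μ := lintegral_mono pointwise
    _ = ∑' k : ℤ, (2 ^ (k + 1)) ^ p * μ (S k) := by
      rw [lintegral_tsum fun k ↦ (measurable_const.indicator (hS k)).aemeasurable]
      exact tsum_congr fun k ↦ lintegral_indicator_const (hS k) _
    _ ≤ ∑' k : ℤ, 2 ^ p * ((2 ^ k) ^ p * distribution μ g (2 ^ k)) := by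
      refine ENNReal.tsum_le_tsum fun k ↦ ?_
      rw [ENNReal.zpow_add two_ne_zero ENNReal.ofNat_ne_top, zpow_one,
        ENNReal.mul_rpow_of_nonneg _ _ hp.le, mul_comm (_ ^ p), mul_assoc]
      exact mul_le_mul_right (mul_le_mul_right (measure_mono fun x hx ↦ hx.1) _) _
    _ = 2 ^ p * ∑' k : ℤ, (2 ^ k) ^ p * distribution μ g (2 ^ k) := ENNReal.tsum_mul_left

theorem eLpNorm_sq_le_four_mul_tsum {f : α → ℝ} (hf : Measurable f) {p : ℝ} (hp : 2 ≤ p) :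
    eLpNorm f (ENNReal.ofReal p) μ ^ 2 ≤
      4 * ∑' k : ℤ, 4 ^ k * distribution μ (‖f ·‖ₑ) (2 ^ k) ^ (2 / p) := by
  have hp0 : 0 < p := by linarith
  set a : ℤ → ℝ≥0∞ := fun k ↦ distribution μ (‖f ·‖ₑ) (2 ^ k)
  have hterm (k : ℤ) : (2 ^ k) ^ p * a k = (4 ^ k * a k ^ (2 / p)) ^ (p / 2) := by
    rw [ENNReal.mul_rpow_of_nonneg _ _ (by positivity), ← ENNReal.rpow_mul,
      ENNReal.four_zpow_eq_sq, ← ENNReal.rpow_two, ← ENNReal.rpow_mul]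
    field_simp
    rw [ENNReal.rpow_one]
  have hint : ∫⁻ x, ‖f x‖ₑ ^ p ∂μ ≤ 2 ^ p * (∑' k, 4 ^ k * a k ^ (2 / p)) ^ (p / 2) := by
    refine (lintegral_rpow_le_tsum hf.enorm (fun _ ↦ enorm_ne_top) hp0).trans ?_
    exact mul_le_mul_right ((tsum_congr hterm).trans_le
      (ENNReal.tsum_rpow_le_rpow_tsum _ (by linarith))) _
  calc eLpNorm f (ENNReal.ofReal p) μ ^ 2 = (∫⁻ x, ‖f x‖ₑ ^ p ∂μ) ^ (2 / p) := by
        rw [eLpNorm_eq_lintegral_rpow_enorm_toReal (by simpa using hp0) ENNReal.ofReal_ne_top,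
          ENNReal.toReal_ofReal hp0.le, ← ENNReal.rpow_natCast, ← ENNReal.rpow_mul]
        congr 1
        push_cast
        ring
    _ ≤ (2 ^ p * (∑' k, 4 ^ k * a k ^ (2 / p)) ^ (p / 2)) ^ (2 / p) :=
        ENNReal.rpow_le_rpow hint (by positivity)
    _ = 4 * ∑' k, 4 ^ k * a k ^ (2 / p) := by
        rw [ENNReal.mul_rpow_of_nonneg _ _ (by positivity), ← ENNReal.rpow_mul,
          ← ENNReal.rpow_mul, mul_div_cancel₀ _ hp0.ne', show p / 2 * (2 / p) = 1 by field_simp,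
          ENNReal.rpow_one, ENNReal.rpow_two]
        norm_num

theorem tsum_zpow_mul_rpow_mul_distribution_le (hg : Measurable g) (hg_top : ∀ x, g x ≠ ∞)
    {θ : ℝ} (hθ : 0 ≤ θ) :
    ∑' k : ℤ, 4 ^ k * distribution μ g (2 ^ k) ^ (-θ) * distribution μ g (2 ^ (k + 1)) ≤
      (1 - 4⁻¹)⁻¹ * ∑' k : ℤ, 4 ^ k * distribution μ g (2 ^ k) ^ (-θ) *
        μ (g ⁻¹' Ioc (2 ^ (k + 1)) (2 ^ (k + 1 + 1))) := by
  set w : ℤ → ℝ≥0∞ := fun k ↦ 4 ^ k * distribution μ g (2 ^ k) ^ (-θ)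
  have hw (k : ℤ) : w k ≤ 4⁻¹ * w (k + 1) := by
    have h4 : (4 : ℝ≥0∞) ^ k = 4⁻¹ * 4 ^ (k + 1) := by
      rw [ENNReal.zpow_add (by norm_num) (by norm_num), zpow_one, mul_comm, mul_assoc,
        ENNReal.mul_inv_cancel (by norm_num) (by norm_num), mul_one]
    simp only [w, h4, mul_assoc]
    refine mul_le_mul_right (mul_le_mul_right ?_ _) _
    exact ENNReal.rpow_le_rpow_of_nonpos
      (distribution_antitone μ g (ENNReal.zpow_le_of_le one_le_two (by omega))) (by linarith)
  have := tsum_mul_tsum_add_le (d := fun j ↦ μ (g ⁻¹' Ioc (2 ^ (j + 1)) (2 ^ (j + 1 + 1)))) hw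
  simp_rw [distribution_zpow_eq_tsum hg hg_top (_ + 1)]
  convert this using 4 with k m
  simp only [add_right_comm]

theorem tsum_setLIntegral_preimage_Ioc_zpow_le (hg : Measurable g) (F : α → ℝ≥0∞) :
    ∑' k : ℤ, ∫⁻ x in g ⁻¹' Ioc (2 ^ k) (2 ^ (k + 1)), F x ∂μ ≤ ∫⁻ x, F x ∂μ := by
  rw [← lintegral_iUnion (fun k ↦ hg measurableSet_Ioc) (pairwise_disjoint_preimage_Ioc_zpow g)]
  exact setLIntegral_le_lintegral _ _

end LevelSets

lemma four_zpow_le_enorm_sub_sq {k : ℤ} {u v : ℝ} (hu : 2 ^ (k + 1) < ‖u‖ₑ)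
    (hv : ‖v‖ₑ ≤ 2 ^ k) :
    4 ^ k ≤ ‖u - v‖ₑ ^ 2 := by
  have hk : (2 : ℝ≥0∞) ^ k ≠ ∞ := ENNReal.zpow_ne_top two_ne_zero ENNReal.ofNat_ne_top k
  have hlt : 2 ^ k + 2 ^ k < ‖u - v‖ₑ + 2 ^ k :=
    calc (2 : ℝ≥0∞) ^ k + 2 ^ k = 2 ^ (k + 1) := by
          rw [ENNReal.zpow_add two_ne_zero ENNReal.ofNat_ne_top, zpow_one, mul_two]
      _ < ‖u‖ₑ := hu
      _ = ‖(u - v) + v‖ₑ := by rw [sub_add_cancel]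
      _ ≤ ‖u - v‖ₑ + ‖v‖ₑ := enorm_add_le _ _
      _ ≤ ‖u - v‖ₑ + 2 ^ k := by gcongr
  rw [ENNReal.four_zpow_eq_sq]
  exact pow_le_pow_left₀ zero_le ((ENNReal.add_lt_add_iff_right hk).1 hlt).le 2

lemma ofReal_sq_abs_div_norm_sub_rpow {E : Type*} [NormedAddCommGroup E] {x y : E} (hxy : x ≠ y)
    (u : ℝ) {p : ℝ} (hp : 0 ≤ p) :
    ENNReal.ofReal (|u| ^ 2 / ‖x - y‖ ^ p) = ‖u‖ₑ ^ 2 * ‖x - y‖ₑ ^ (-p) := by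
  rw [ENNReal.ofReal_div_of_pos (Real.rpow_pos_of_pos (norm_pos_iff.2 (sub_ne_zero.2 hxy)) p),
    ENNReal.ofReal_pow (abs_nonneg u), ← Real.enorm_eq_ofReal_abs,
    ← ENNReal.ofReal_rpow_of_nonneg (norm_nonneg _) hp, ofReal_norm, div_eq_mul_inv,
    ENNReal.rpow_neg]

theorem four_zpow_mul_setLIntegral_le_lintegral {E : Type*} [NormedAddCommGroup E]
    [MeasurableSpace E] (μ : Measure E) {f : E → ℝ} (hf : Measurable f) {p : ℝ} (hp : 0 ≤ p)
    {k : ℤ} {x : E} (hx : 2 ^ (k + 1) < ‖f x‖ₑ) :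
    4 ^ k * ∫⁻ y in {y | 2 ^ k < ‖f y‖ₑ}ᶜ, ‖x - y‖ₑ ^ (-p) ∂μ ≤
      ∫⁻ y, ENNReal.ofReal (|f x - f y| ^ 2 / ‖x - y‖ ^ p) ∂μ := by
  have hA : MeasurableSet {y | 2 ^ k < ‖f y‖ₑ} := measurableSet_lt measurable_const hf.enorm
  have hxA : 2 ^ k < ‖f x‖ₑ :=
    (ENNReal.zpow_le_of_le one_le_two (Int.le_add_one le_rfl)).trans_lt hx
  rw [← lintegral_const_mul' _ _ (ENNReal.zpow_ne_top (by norm_num) (by norm_num) k)]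
  refine (setLIntegral_mono' hA.compl fun y hy ↦ ?_).trans (setLIntegral_le_lintegral _ _)
  rw [ofReal_sq_abs_div_norm_sub_rpow (fun hxy ↦ hy (by subst hxy; exact hxA)) _ hp]
  exact mul_le_mul_left (four_zpow_le_enorm_sub_sq hx (not_lt.1 hy)) _

section Gagliardo

variable {E : Type*} [NormedAddCommGroup E] [NormedSpace ℝ E] [MeasurableSpace E]

noncomputable def gagliardoEnergy (μ : Measure E) (s : ℝ) (f : E → ℝ) : ℝ≥0∞ :=
  ∫⁻ x, ∫⁻ y, ENNReal.ofReal (|f x - f y| ^ 2 / ‖x - y‖ ^ ((finrank ℝ E : ℝ) + 2 * s)) ∂μ ∂μ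

-- `4` from the layer cake, `8 ^ (1 - θ)⁻¹` from the absorption, `(1 - 4⁻¹)⁻¹` from the shells
-- and the last factor from `le_setLIntegral_compl_enorm_sub_rpow_neg`, where `θ = 2s/n`
noncomputable def sobolevConst (μ : Measure E) (s : ℝ) : ℝ≥0∞ :=
  4 * (8 ^ (1 - 2 * s / finrank ℝ E)⁻¹ * ((1 - 4⁻¹)⁻¹ *
    ((μ (ball 0 1) / 2) ^ ((finrank ℝ E + 2 * s) / finrank ℝ E))⁻¹))

variable [FiniteDimensional ℝ E] (μ : Measure E) [μ.IsAddHaarMeasure]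

lemma sobolevConst_ne_zero (s : ℝ) : sobolevConst μ s ≠ 0 := by
  have hω : μ (ball 0 1) ≠ 0 := (measure_ball_pos μ 0 one_pos).ne'
  have hω' : μ (ball 0 1) / 2 ≠ ∞ := ENNReal.div_ne_top measure_ball_lt_top.ne two_ne_zero
  simp [sobolevConst, ENNReal.rpow_eq_zero_iff, ENNReal.rpow_eq_top_iff, hω, hω']

lemma sobolevConst_ne_top (s : ℝ) : sobolevConst μ s ≠ ∞ := by
  have hω : μ (ball 0 1) ≠ 0 := (measure_ball_pos μ 0 one_pos).ne'
  have hω' : μ (ball 0 1) / 2 ≠ ∞ := ENNReal.div_ne_top measure_ball_lt_top.ne two_ne_zero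
  have h4 : (1 : ℝ≥0∞) - 4⁻¹ ≠ 0 := (tsub_pos_of_lt (ENNReal.inv_lt_one.2 (by norm_num))).ne'
  simp [sobolevConst, ENNReal.rpow_eq_zero_iff, ENNReal.rpow_eq_top_iff, ENNReal.mul_eq_top, hω,
    hω', h4]

variable [BorelSpace E]

theorem le_setLIntegral_compl_enorm_sub_rpow_neg [Nontrivial E] {p : ℝ} (hp : 0 ≤ p) (x : E)
    {s : Set E} (hs0 : μ s ≠ 0) (hs : μ s ≠ ∞) :
    (μ (ball 0 1) / 2) ^ (p / finrank ℝ E) * μ s ^ (1 - p / finrank ℝ E) ≤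
      ∫⁻ y in sᶜ, ‖x - y‖ₑ ^ (-p) ∂μ := by
  set d : ℝ := (finrank ℝ E : ℝ)
  have hd : 0 < d := Nat.cast_pos.2 finrank_pos
  set ω := μ (ball 0 1)
  have hω0 : ω ≠ 0 := (measure_ball_pos μ 0 one_pos).ne'
  have hω : ω ≠ ∞ := measure_ball_lt_top.ne
  -- the radius of a ball of measure `2 μ s`
  set r : ℝ≥0∞ := (2 * μ s / ω) ^ d⁻¹
  have hr : r ≠ ∞ := ENNReal.rpow_ne_top_of_nonneg (inv_nonneg.2 hd.le)
    (ENNReal.div_ne_top (ENNReal.mul_ne_top ENNReal.ofNat_ne_top hs) hω0)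
  have hball : μ (ball x r.toReal) = 2 * μ s := by
    rw [Measure.addHaar_ball μ x ENNReal.toReal_nonneg,
      ENNReal.ofReal_pow ENNReal.toReal_nonneg, ENNReal.ofReal_toReal hr, ← ENNReal.rpow_natCast,
      ← ENNReal.rpow_mul, inv_mul_cancel₀ hd.ne', ENNReal.rpow_one,
      ENNReal.div_mul_cancel hω0 hω]
  have hmeas : μ s ≤ μ (ball x r.toReal \ s) :=
    calc μ s = μ (ball x r.toReal) - μ s := by
          rw [hball, two_mul, ENNReal.add_sub_cancel_right hs]
      _ ≤ _ := le_measure_sdiff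
  have hkernel (y : E) (hy : y ∈ ball x r.toReal) : r ^ (-p) ≤ ‖x - y‖ₑ ^ (-p) := by
    refine ENNReal.rpow_le_rpow_of_nonpos ?_ (neg_nonpos.2 hp)
    rw [← ofReal_norm, ← ENNReal.ofReal_toReal hr, ← dist_eq_norm, dist_comm]
    exact ENNReal.ofReal_le_ofReal (mem_ball.1 hy).le
  have hconst : (ω / 2) ^ (p / d) * μ s ^ (1 - p / d) = r ^ (-p) * μ s := by
    have hsplit : ω / (2 * μ s) = ω / 2 * (μ s)⁻¹ := by
      rw [div_eq_mul_inv, div_eq_mul_inv, ENNReal.mul_inv (Or.inl two_ne_zero)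
        (Or.inl ENNReal.ofNat_ne_top), mul_assoc]
    have hpow : μ s ^ (1 - p / d) = (μ s)⁻¹ ^ (p / d) * μ s := by
      rw [ENNReal.inv_rpow, ← ENNReal.rpow_neg, sub_eq_neg_add, ENNReal.rpow_add _ _ hs0 hs,
        ENNReal.rpow_one]
    rw [← ENNReal.rpow_mul, show d⁻¹ * -p = -(p / d) by ring, ENNReal.rpow_neg,
      ← ENNReal.inv_rpow, ENNReal.inv_div (Or.inl hω) (Or.inl hω0), hsplit,
      ENNReal.mul_rpow_of_nonneg _ _ (div_nonneg hp hd.le), hpow, mul_assoc]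
  calc (ω / 2) ^ (p / d) * μ s ^ (1 - p / d) = r ^ (-p) * μ s := hconst
    _ ≤ r ^ (-p) * μ (ball x r.toReal \ s) := mul_le_mul_right hmeas _
    _ = ∫⁻ _ in ball x r.toReal \ s, r ^ (-p) ∂μ := (setLIntegral_const _ _).symm
    _ ≤ ∫⁻ y in ball x r.toReal \ s, ‖x - y‖ₑ ^ (-p) ∂μ :=
      setLIntegral_mono (by fun_prop) fun y hy ↦ hkernel y hy.1
    _ ≤ ∫⁻ y in sᶜ, ‖x - y‖ₑ ^ (-p) ∂μ := lintegral_mono_set fun y hy ↦ hy.2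

theorem mul_tsum_le_gagliardoEnergy [Nontrivial E] {s : ℝ} (hs : 0 ≤ s) {f : E → ℝ}
    (hf : Measurable f) (hfin : ∀ k : ℤ, distribution μ (‖f ·‖ₑ) (2 ^ k) ≠ ∞) :
    (μ (ball 0 1) / 2) ^ ((finrank ℝ E + 2 * s) / finrank ℝ E) *
        ∑' k : ℤ, 4 ^ k * distribution μ (‖f ·‖ₑ) (2 ^ k) ^ (-(2 * s / finrank ℝ E)) *
          μ ((‖f ·‖ₑ) ⁻¹' Ioc (2 ^ (k + 1)) (2 ^ (k + 1 + 1))) ≤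
      gagliardoEnergy μ s f := by
  set d : ℝ := (finrank ℝ E : ℝ)
  have hd : 0 < d := Nat.cast_pos.2 finrank_pos
  have hp : 0 ≤ d + 2 * s := by positivity
  set c := (μ (ball 0 1) / 2) ^ ((d + 2 * s) / d)
  set a : ℤ → ℝ≥0∞ := fun k ↦ distribution μ (‖f ·‖ₑ) (2 ^ k)
  set S : ℤ → Set E := fun k ↦ (‖f ·‖ₑ) ⁻¹' Ioc (2 ^ k) (2 ^ (k + 1))
  set F : E → ℝ≥0∞ := fun x ↦
    ∫⁻ y, ENNReal.ofReal (|f x - f y| ^ 2 / ‖x - y‖ ^ (d + 2 * s)) ∂μ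
  have hshell (k : ℤ) : c * (4 ^ k * a k ^ (-(2 * s / d)) * μ (S (k + 1))) ≤
      ∫⁻ x in S (k + 1), F x ∂μ := by
    rcases eq_or_ne (a k) 0 with h0 | h0
    · have hS : S (k + 1) ⊆ {x | 2 ^ k < ‖f x‖ₑ} := fun x hx ↦
        (ENNReal.zpow_le_of_le one_le_two (Int.le_add_one le_rfl)).trans_lt hx.1
      simp [measure_mono_null hS h0]
    have hkernel (x : E) : c * a k ^ (-(2 * s / d)) ≤
        ∫⁻ y in {y | 2 ^ k < ‖f y‖ₑ}ᶜ, ‖x - y‖ₑ ^ (-(d + 2 * s)) ∂μ := by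
      have := le_setLIntegral_compl_enorm_sub_rpow_neg μ hp x h0 (hfin k)
      rwa [show 1 - (d + 2 * s) / d = -(2 * s / d) by field_simp; ring] at this
    calc c * (4 ^ k * a k ^ (-(2 * s / d)) * μ (S (k + 1)))
        = ∫⁻ _ in S (k + 1), 4 ^ k * (c * a k ^ (-(2 * s / d))) ∂μ := by
          rw [setLIntegral_const]; ring
      _ ≤ ∫⁻ x in S (k + 1), F x ∂μ :=
          setLIntegral_mono' (hf.enorm measurableSet_Ioc) fun x hx ↦ (mul_le_mul_right
            (hkernel x) _).trans (four_zpow_mul_setLIntegral_le_lintegral μ hf hp hx.1)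
  calc c * ∑' k : ℤ, 4 ^ k * a k ^ (-(2 * s / d)) * μ (S (k + 1))
      = ∑' k : ℤ, c * (4 ^ k * a k ^ (-(2 * s / d)) * μ (S (k + 1))) :=
        ENNReal.tsum_mul_left.symm
    _ ≤ ∑' k : ℤ, ∫⁻ x in S (k + 1), F x ∂μ := ENNReal.tsum_le_tsum hshell
    _ = ∑' k : ℤ, ∫⁻ x in S k, F x ∂μ :=
        (Equiv.addRight (1 : ℤ)).tsum_eq fun k ↦ ∫⁻ x in S k, F x ∂μ
    _ ≤ gagliardoEnergy μ s f := tsum_setLIntegral_preimage_Ioc_zpow_le hf.enorm F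

theorem eLpNorm_sq_le_sobolevConst_mul_gagliardoEnergy {s : ℝ} (hs : 0 ≤ s)
    (hsd : 2 * s < finrank ℝ E) {f : E → ℝ} (hf : Measurable f)
    (hsupp : μ (Function.support f) ≠ ∞) :
    eLpNorm f (ENNReal.ofReal (2 * finrank ℝ E / (finrank ℝ E - 2 * s))) μ ^ 2 ≤
      sobolevConst μ s * gagliardoEnergy μ s f := by
  set d : ℝ := (finrank ℝ E : ℝ)
  have hd : 0 < d := by linarith
  have : Nontrivial E := (finrank_pos_iff (R := ℝ)).1 (Nat.cast_pos.1 hd)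
  set θ := 2 * s / d
  have hθ0 : 0 ≤ θ := by positivity
  have hθ1 : θ < 1 := (div_lt_one hd).2 hsd
  set c := (μ (ball 0 1) / 2) ^ ((d + 2 * s) / d)
  have hω : μ (ball 0 1) ≠ 0 := (measure_ball_pos μ 0 one_pos).ne'
  have hω' : μ (ball 0 1) / 2 ≠ ∞ := ENNReal.div_ne_top measure_ball_lt_top.ne two_ne_zero
  have hc0 : c ≠ 0 := by simp [c, ENNReal.rpow_eq_zero_iff, hω, hω']
  have hc : c ≠ ∞ := by simp [c, ENNReal.rpow_eq_top_iff, hω, hω']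
  set a : ℤ → ℝ≥0∞ := fun k ↦ distribution μ (‖f ·‖ₑ) (2 ^ k)
  have haM (k : ℤ) : a k ≤ μ (Function.support f) :=
    measure_mono fun x (hx : 2 ^ k < ‖f x‖ₑ) ↦ Function.mem_support.2 fun h ↦ by simp [h] at hx
  have hp : 2 ≤ 2 * d / (d - 2 * s) := by
    rw [le_div_iff₀ (by linarith)]
    linarith
  have hpθ : 2 / (2 * d / (d - 2 * s)) = 1 - θ := by
    simp only [θ]
    field_simp
  have hT := mul_tsum_le_gagliardoEnergy μ hs hf fun k ↦ ne_top_of_le_ne_top hsupp (haM k)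
  calc eLpNorm f (ENNReal.ofReal (2 * d / (d - 2 * s))) μ ^ 2
      ≤ 4 * ∑' k, 4 ^ k * a k ^ (1 - θ) := by
        simpa only [hpθ] using eLpNorm_sq_le_four_mul_tsum (μ := μ) hf hp
    _ ≤ 4 * ((2 * 4) ^ (1 - θ)⁻¹ * ∑' k, 4 ^ k * a k ^ (-θ) * a (k + 1)) := by
        gcongr
        exact tsum_zpow_mul_rpow_le hθ0 hθ1 (by norm_num) (by norm_num) hsupp haM
    _ ≤ 4 * ((2 * 4) ^ (1 - θ)⁻¹ * ((1 - 4⁻¹)⁻¹ * ∑' k : ℤ, 4 ^ k * a k ^ (-θ) *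
          μ ((‖f ·‖ₑ) ⁻¹' Ioc (2 ^ (k + 1)) (2 ^ (k + 1 + 1))))) := by
        gcongr
        exact tsum_zpow_mul_rpow_mul_distribution_le hf.enorm (fun _ ↦ enorm_ne_top) hθ0
    _ ≤ 4 * ((2 * 4) ^ (1 - θ)⁻¹ * ((1 - 4⁻¹)⁻¹ * (c⁻¹ * gagliardoEnergy μ s f))) := by
        gcongr
        exact (ENNReal.mul_le_iff_le_inv hc0 hc).1 hT
    _ = sobolevConst μ s * gagliardoEnergy μ s f := by
        rw [sobolevConst]
        norm_num
        ring

end Gagliardo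

/-- Fractional Sobolev inequality: for measurable compactly supported `f`,
`‖f‖²_{L^{2n/(n-2s)}} ≤ C(n,s) ∫∫ |f x - f y|² / |x-y|^{n+2s}`. -/
theorem fractional_sobolev_inequality (n : ℕ) (hn : 2 ≤ n) (s : ℝ) (hs : s ∈ Ioo (0:ℝ) 1) :
    ∃ C > (0:ℝ), ∀ f : EuclideanSpace ℝ (Fin n) → ℝ, Measurable f → HasCompactSupport f →
      (eLpNorm f (ENNReal.ofReal (2 * n / (n - 2 * s))) volume) ^ 2 ≤
        ENNReal.ofReal C *
          ∫⁻ x, ∫⁻ y, ENNReal.ofReal (|f x - f y| ^ 2 / ‖x - y‖ ^ ((n : ℝ) + 2 * s)) := by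
  have hsn : 2 * s < finrank ℝ (EuclideanSpace ℝ (Fin n)) := by
    rw [finrank_euclideanSpace_fin]
    have : (2 : ℝ) ≤ n := by exact_mod_cast hn
    linarith [hs.2]
  have hC := sobolevConst_ne_top (volume : Measure (EuclideanSpace ℝ (Fin n))) s
  refine ⟨_, ENNReal.toReal_pos (sobolevConst_ne_zero _ s) hC, fun f hf hfc ↦ ?_⟩
  have hsupp : volume (Function.support f) ≠ ∞ :=
    ((measure_mono (subset_tsupport f)).trans_lt hfc.isCompact.measure_lt_top).ne
  rw [ENNReal.ofReal_toReal hC]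
  simpa [gagliardoEnergy, finrank_euclideanSpace_fin] using
    eLpNorm_sq_le_sobolevConst_mul_gagliardoEnergy volume hs.1.le hsn hf hsupp
end

section
/- Let n ≥ 1 and s ∈ (0,1). Fix x ∈ ℝⁿ and let E ⊂ ℝⁿ be a measurable set with finite Lebesgue measure |E|. Then ∫_{ℝⁿ∖E} |x−y|^{−(n+2s)} dy ≥ c(n,s) |E|^{−2s/n} for a suitable constant c(n,s) > 0 depending only on n and s. -/
/-!
Let `B` be the ball around `x` with `|B| = 2|E|`. At least half of `B`, i.e. a set of measure
`≥ |E|`, lies outside `E`, and on `B` the kernel is at least `r(B)^{-(n+2s)}`, where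
`r(B) ≍ |E|^{1/n}`. Hence the integral is at least a multiple of `|E|^{1-(n+2s)/n} = |E|^{-2s/n}`.
The bound survives replacing `|E|` by any `t > |E|`; letting `t` decrease to `|E|` also covers
`|E| = 0`, where the right-hand side is `∞`.
-/

open MeasureTheory Set Filter Topology Module
open scoped ENNReal

theorem ofReal_rpow_mul_measure_ball_sub_le_setLIntegral_compl {X : Type*} [MetricSpace X]
    [MeasurableSpace X] [OpensMeasurableSpace X] (μ : Measure X) [NullSingletonClass μ]
    {p : ℝ} (hp : p ≤ 0) (x : X) (ρ : ℝ) (E : Set X) :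
    ENNReal.ofReal (ρ ^ p) * (μ (Metric.ball x ρ) - μ E) ≤
      ∫⁻ y in Eᶜ, ENNReal.ofReal (dist x y ^ p) ∂μ :=
  calc ENNReal.ofReal (ρ ^ p) * (μ (Metric.ball x ρ) - μ E)
      ≤ ENNReal.ofReal (ρ ^ p) * μ (Metric.ball x ρ \ E) := by gcongr; exact le_measure_sdiff
    _ = ∫⁻ _ in Metric.ball x ρ \ E, ENNReal.ofReal (ρ ^ p) ∂μ := (setLIntegral_const _ _).symm
    _ ≤ ∫⁻ y in Metric.ball x ρ \ E, ENNReal.ofReal (dist x y ^ p) ∂μ := by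
        refine setLIntegral_mono_ae (by fun_prop) ?_
        -- at `y = x` the junk value `0 ^ p = 0` breaks the pointwise bound
        filter_upwards [Measure.ae_ne μ x] with y hyx hy
        have hxy : 0 < dist x y := dist_pos.2 hyx.symm
        have hyρ : dist x y < ρ := by rw [dist_comm]; exact hy.1
        exact ENNReal.ofReal_le_ofReal (Real.rpow_le_rpow_of_nonpos hxy hyρ.le hp)
    _ ≤ ∫⁻ y in Eᶜ, ENNReal.ofReal (dist x y ^ p) ∂μ :=
        lintegral_mono_set fun _ hy => hy.2

theorem rpow_inv_rpow_neg_add_mul_eq {w t d s : ℝ} (hw : 0 < w) (ht : 0 < t) (hd : 0 < d) :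
    ((2 * t / w) ^ d⁻¹) ^ (-(d + 2 * s)) * t = (w / 2) ^ (1 + 2 * s / d) * t ^ (-(2 * s / d)) := by
  have hexp : d⁻¹ * -(d + 2 * s) = -(1 + 2 * s / d) := by field_simp
  rw [← Real.rpow_mul (by positivity), hexp, Real.rpow_neg (by positivity), Real.rpow_neg ht.le,
    Real.div_rpow (by positivity) hw.le, Real.div_rpow hw.le zero_le_two,
    Real.mul_rpow zero_le_two ht.le, Real.rpow_add ht, Real.rpow_one]
  field_simp

theorem exists_pos_ofReal_mul_rpow_le_setLIntegral_compl_norm_rpow {V : Type*}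
    [NormedAddCommGroup V] [NormedSpace ℝ V] [FiniteDimensional ℝ V] [MeasurableSpace V]
    [BorelSpace V] (μ : Measure V) [μ.IsAddHaarMeasure] (hV : 0 < finrank ℝ V) {s : ℝ}
    (hs : 0 ≤ s) :
    ∃ c > (0 : ℝ), ∀ (x : V) (E : Set V) (t : ℝ), 0 < t → μ E ≤ ENNReal.ofReal t →
      ENNReal.ofReal (c * t ^ (-(2 * s / finrank ℝ V))) ≤
        ∫⁻ y in Eᶜ, ENNReal.ofReal (‖x - y‖ ^ (-((finrank ℝ V : ℝ) + 2 * s))) ∂μ := by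
  have : Nontrivial V := Module.nontrivial_of_finrank_pos hV
  set d : ℝ := (finrank ℝ V : ℝ)
  set ω : ℝ := (μ (Metric.ball 0 1)).toReal with hω_def
  have hω : 0 < ω := ENNReal.toReal_pos (Metric.measure_ball_pos μ 0 one_pos).ne'
    measure_ball_lt_top.ne
  have hd : 0 < d := by positivity
  refine ⟨(ω / 2) ^ (1 + 2 * s / d), by positivity, fun x E t ht hEt => ?_⟩
  set ρ : ℝ := (2 * t / ω) ^ d⁻¹
  have hball : μ (Metric.ball x ρ) = ENNReal.ofReal (2 * t) := by
    rw [Measure.addHaar_ball_of_pos μ x (by positivity), ← Real.rpow_natCast,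
      Real.rpow_inv_rpow (by positivity) hd.ne', ← ENNReal.ofReal_toReal measure_ball_lt_top.ne,
      ← hω_def, ← ENNReal.ofReal_mul (by positivity), div_mul_cancel₀ _ hω.ne']
  have hgap : ENNReal.ofReal t ≤ μ (Metric.ball x ρ) - μ E := by
    rw [hball, two_mul, ENNReal.ofReal_add ht.le ht.le]
    exact ENNReal.le_sub_of_add_le_left (hEt.trans_lt ENNReal.ofReal_lt_top).ne (by gcongr)
  calc ENNReal.ofReal ((ω / 2) ^ (1 + 2 * s / d) * t ^ (-(2 * s / d)))
      = ENNReal.ofReal (ρ ^ (-(d + 2 * s))) * ENNReal.ofReal t := by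
        rw [← rpow_inv_rpow_neg_add_mul_eq hω ht hd, ENNReal.ofReal_mul (by positivity)]
    _ ≤ ENNReal.ofReal (ρ ^ (-(d + 2 * s))) * (μ (Metric.ball x ρ) - μ E) := by gcongr
    _ ≤ ∫⁻ y in Eᶜ, ENNReal.ofReal (dist x y ^ (-(d + 2 * s))) ∂μ :=
        ofReal_rpow_mul_measure_ball_sub_le_setLIntegral_compl μ (by linarith) x ρ E
    _ = ∫⁻ y in Eᶜ, ENNReal.ofReal (‖x - y‖ ^ (-(d + 2 * s))) ∂μ := by simp_rw [dist_eq_norm]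

theorem Continuous.apply_le_of_forall_lt_ofReal {f : ℝ≥0∞ → ℝ≥0∞} (hf : Continuous f)
    {m b : ℝ≥0∞} (hm : m ≠ ∞) (h : ∀ t : ℝ, m < ENNReal.ofReal t → f (ENNReal.ofReal t) ≤ b) :
    f m ≤ b := by
  have hlim : Tendsto (fun t => f (ENNReal.ofReal t)) (𝓝[>] m.toReal) (𝓝 (f m)) := by
    conv_rhs => rw [← ENNReal.ofReal_toReal hm]
    exact ((hf.comp ENNReal.continuous_ofReal).tendsto _).mono_left nhdsWithin_le_nhds
  refine le_of_tendsto hlim ?_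
  filter_upwards [self_mem_nhdsWithin] with t ht
  exact h t ((ENNReal.lt_ofReal_iff_toReal_lt hm).2 ht)

/-- For any `x` and any measurable set `E` of finite measure,
`∫_{Eᶜ} |x-y|^{-(n+2s)} dy ≥ c(n,s) |E|^{-2s/n}`. -/
theorem integral_complement_ge (n : ℕ) (hn : 1 ≤ n) (s : ℝ) (hs : s ∈ Ioo (0:ℝ) 1) :
    ∃ c > (0:ℝ), ∀ (x : EuclideanSpace ℝ (Fin n)) (E : Set (EuclideanSpace ℝ (Fin n))),
      MeasurableSet E → volume E < ⊤ →
      ENNReal.ofReal c * (volume E) ^ (-(2 * s / (n : ℝ))) ≤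
        ∫⁻ y in Eᶜ, ENNReal.ofReal (‖x - y‖ ^ (-((n : ℝ) + 2 * s))) := by
  have hdim : finrank ℝ (EuclideanSpace ℝ (Fin n)) = n := finrank_euclideanSpace_fin
  obtain ⟨c, hc, hbound⟩ := exists_pos_ofReal_mul_rpow_le_setLIntegral_compl_norm_rpow
    (volume : Measure (EuclideanSpace ℝ (Fin n))) (hdim.symm ▸ hn) hs.1.le
  rw [hdim] at hbound
  refine ⟨c, hc, fun x E _ hE => ?_⟩
  refine ((ENNReal.continuous_const_mul ENNReal.ofReal_ne_top).comp
    ENNReal.continuous_rpow_const).apply_le_of_forall_lt_ofReal hE.ne fun t hEt => ?_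
  have ht : 0 < t := ENNReal.ofReal_pos.1 (pos_of_gt hEt)
  rw [Function.comp_apply, ENNReal.ofReal_rpow_of_pos ht, ← ENNReal.ofReal_mul hc.le]
  exact hbound x E t ht hEt.le
end

section
/- Let n ≥ 1, s ∈ (0, n/2) and T > 1. Let N ∈ ℤ and let (a_k)_{k∈ℤ} be a bounded, nonnegative, decreasing sequence of real numbers with a_k = 0 for every k ≥ N. Then Σ_{k∈ℤ} a_k^{(n−2s)/n} T^k ≤ C(n,s,T) Σ_{k∈ℤ, a_k≠0} a_{k+1} a_k^{−2s/n} T^k, for a suitable constant C(n,s,T) > 0 independent of N and of the sequence. -/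
/-!
Put `θ = (n - 2s)/n > 0`, so that `-2s/n = θ - 1`, and let `c > 0` with `c ^ θ = 1/(2T)`.
For `0 ≤ y ≤ x` either `y ≤ c x`, and then `y^θ ≤ c^θ x^θ`, or `y > c x`, and then
`y^θ ≤ x^θ ≤ c⁻¹ y x^(θ-1)`. Applied to `y = a_{k+1}`, `x = a_k` and multiplied by `T^(k+1)`,
this bounds the `(k+1)`-st term of the left-hand series by half its `k`-th term plus `T/c` times
the `k`-th term of the right-hand series. Summing over `k` and absorbing the half gives the
claim with `C = 2T/c`; both series converge because their terms are `O(T^k)` and vanish for `k ≥ N`.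
-/

open Set

theorem mul_rpow_sub_one_le_rpow {x y θ : ℝ} (hy : 0 ≤ y) (hyx : y ≤ x) :
    y * x ^ (θ - 1) ≤ x ^ θ := by
  rcases (hy.trans hyx).eq_or_lt with rfl | hx
  · rw [le_antisymm hyx hy, zero_mul]
    exact Real.rpow_nonneg le_rfl θ
  · calc y * x ^ (θ - 1) ≤ x * x ^ (θ - 1) := by gcongr
      _ = x ^ θ := by rw [Real.rpow_sub_one hx.ne']; field_simp

theorem rpow_le_rpow_mul_rpow_add_inv_mul {x y θ c : ℝ} (hθ : 0 < θ) (hc : 0 < c) (hy : 0 ≤ y)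
    (hyx : y ≤ x) : y ^ θ ≤ c ^ θ * x ^ θ + c⁻¹ * (y * x ^ (θ - 1)) := by
  have hx : 0 ≤ x := hy.trans hyx
  rcases le_or_gt y (c * x) with hsmall | hlarge
  · calc y ^ θ ≤ (c * x) ^ θ := Real.rpow_le_rpow hy hsmall hθ.le
      _ = c ^ θ * x ^ θ := Real.mul_rpow hc.le hx
      _ ≤ _ := le_add_of_nonneg_right (by positivity)
  · have hx0 : 0 < x := by nlinarith
    calc y ^ θ ≤ x ^ θ := Real.rpow_le_rpow hy hyx hθ.le
      _ = c⁻¹ * (c * x * x ^ (θ - 1)) := by rw [Real.rpow_sub_one hx0.ne']; field_simp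
      _ ≤ c⁻¹ * (y * x ^ (θ - 1)) := by gcongr
      _ ≤ _ := le_add_of_nonneg_left (by positivity)

theorem summable_of_nonneg_of_le_mul_zpow {T C : ℝ} {N : ℤ} {f : ℤ → ℝ} (hT : 1 < T)
    (h0 : ∀ k, 0 ≤ f k) (hle : ∀ k, f k ≤ C * T ^ k) (hN : ∀ k, N ≤ k → f k = 0) :
    Summable f := by
  refine Summable.of_nat_of_neg ?_ ?_
  · refine summable_of_ne_finset_zero (s := Finset.range N.toNat) fun n hn => hN n ?_
    rw [Finset.mem_range, not_lt] at hn
    omega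
  · have hgeom := (summable_geometric_of_lt_one (by positivity)
      (inv_lt_one_of_one_lt₀ hT)).mul_left C
    refine hgeom.of_nonneg_of_le (fun n => h0 _) fun n => ?_
    simpa only [zpow_neg, zpow_natCast, inv_pow] using hle (-n)

theorem one_sub_mul_tsum_le_of_succ_le {f g : ℤ → ℝ} {c : ℝ} (hf : Summable f) (hg : Summable g)
    (h : ∀ k, f (k + 1) ≤ c * f k + g k) : (1 - c) * ∑' k, f k ≤ ∑' k, g k := by
  have hshift : ∑' k, f (k + 1) = ∑' k, f k := (Equiv.addRight 1).tsum_eq f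
  have hstep : ∑' k, f (k + 1) ≤ c * ∑' k, f k + ∑' k, g k :=
    calc ∑' k, f (k + 1) ≤ ∑' k, (c * f k + g k) :=
          Summable.tsum_le_tsum h (hf.comp_injective (add_left_injective 1))
            ((hf.mul_left c).add hg)
      _ = c * ∑' k, f k + ∑' k, g k := by rw [(hf.mul_left c).tsum_add hg, tsum_mul_left]
  linarith

theorem tsum_rpow_mul_zpow_le {θ T : ℝ} (hθ : 0 < θ) (hT : 1 < T) {a : ℤ → ℝ} {N : ℤ}
    (ha0 : ∀ k, 0 ≤ a k) (hanti : Antitone a) (hbdd : BddAbove (range a))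
    (hN : ∀ k, N ≤ k → a k = 0) :
    ∑' k, a k ^ θ * T ^ k ≤
      2 * T / (2 * T)⁻¹ ^ θ⁻¹ * ∑' k, a (k + 1) * a k ^ (θ - 1) * T ^ k := by
  have hT0 : 0 < T := one_pos.trans hT
  set c := (2 * T)⁻¹ ^ θ⁻¹
  have hc : 0 < c := by positivity
  have hcθ : c ^ θ = (2 * T)⁻¹ := Real.rpow_inv_rpow (by positivity) hθ.ne'
  obtain ⟨M, hM⟩ := hbdd
  have hsucc : ∀ k, a (k + 1) ≤ a k := fun k => hanti (Int.le_add_one le_rfl)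
  have hlhs : Summable fun k => a k ^ θ * T ^ k :=
    summable_of_nonneg_of_le_mul_zpow (C := M ^ θ) hT (fun k => by have := ha0 k; positivity)
      (fun k => by have := ha0 k; gcongr; exact hM ⟨k, rfl⟩)
      (fun k hk => by rw [hN k hk, Real.zero_rpow hθ.ne', zero_mul])
  have hrhs : Summable fun k => a (k + 1) * a k ^ (θ - 1) * T ^ k :=
    hlhs.of_nonneg_of_le (fun k => by have := ha0 k; have := ha0 (k + 1); positivity)
      fun k => by gcongr; exact mul_rpow_sub_one_le_rpow (ha0 _) (hsucc k)
  have hstep : ∀ k, a (k + 1) ^ θ * T ^ (k + 1) ≤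
      2⁻¹ * (a k ^ θ * T ^ k) + T / c * (a (k + 1) * a k ^ (θ - 1) * T ^ k) := by
    intro k
    have key := rpow_le_rpow_mul_rpow_add_inv_mul hθ hc (ha0 (k + 1)) (hsucc k)
    rw [hcθ] at key
    calc a (k + 1) ^ θ * T ^ (k + 1) = T * T ^ k * a (k + 1) ^ θ := by
          rw [zpow_add_one₀ hT0.ne']; ring
      _ ≤ T * T ^ k * ((2 * T)⁻¹ * a k ^ θ + c⁻¹ * (a (k + 1) * a k ^ (θ - 1))) := by gcongr
      _ = _ := by field_simp
  have hsum := one_sub_mul_tsum_le_of_succ_le hlhs (hrhs.mul_left (T / c)) hstep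
  rw [tsum_mul_left] at hsum
  have hC : 2 * T / c * ∑' k, a (k + 1) * a k ^ (θ - 1) * T ^ k =
      2 * (T / c * ∑' k, a (k + 1) * a k ^ (θ - 1) * T ^ k) := by ring
  linarith

theorem summability_lemma_general (n : ℕ) (hn : 1 ≤ n) (s : ℝ) (hsn : s < n / 2)
    (T : ℝ) (hT : 1 < T) :
    ∃ C > (0:ℝ), ∀ (a : ℤ → ℝ) (N : ℤ),
      (∀ k, 0 ≤ a k) → Antitone a → BddAbove (Set.range a) → (∀ k, N ≤ k → a k = 0) →
      ∑' k : ℤ, a k ^ (((n : ℝ) - 2 * s) / n) * T ^ k ≤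
        C * ∑' k : {k : ℤ // a k ≠ 0},
              a ((k : ℤ) + 1) * a (k : ℤ) ^ (-(2 * s / (n : ℝ))) * T ^ (k : ℤ) := by
  have hn0 : (0 : ℝ) < n := by exact_mod_cast hn
  have hT0 : 0 < T := one_pos.trans hT
  set θ := ((n : ℝ) - 2 * s) / n
  have hθ : 0 < θ := div_pos (by linarith) hn0
  have hexp : -(2 * s / (n : ℝ)) = θ - 1 := by simp only [θ]; field_simp; ring
  refine ⟨2 * T / (2 * T)⁻¹ ^ θ⁻¹, by positivity, fun a N ha0 hanti hbdd hN => ?_⟩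
  have hsupp : ∑' k : {k : ℤ // a k ≠ 0}, a (k + 1) * a k ^ (θ - 1) * T ^ (k : ℤ) =
      ∑' k, a (k + 1) * a k ^ (θ - 1) * T ^ k :=
    tsum_subtype_eq_of_support_subset (f := fun k => a (k + 1) * a k ^ (θ - 1) * T ^ k)
      (s := {k | a k ≠ 0}) fun k hk hak => hk <| by
        have hak' : a (k + 1) = 0 := le_antisymm (hak ▸ hanti (Int.le_add_one le_rfl)) (ha0 _)
        simp only [hak', zero_mul]
  rw [hexp, hsupp]
  exact tsum_rpow_mul_zpow_le hθ hT ha0 hanti hbdd hN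

/-- Summability lemma: for a bounded nonnegative decreasing sequence `(a_k)_{k ∈ ℤ}`
vanishing for `k ≥ N`,
`Σ_k a_k^{(n-2s)/n} T^k ≤ C(n,s,T) Σ_{a_k ≠ 0} a_{k+1} a_k^{-2s/n} T^k`,
with `C` independent of `N` and of the sequence. -/
theorem summability_lemma (n : ℕ) (hn : 1 ≤ n) (s : ℝ) (hs0 : 0 < s) (hsn : s < n / 2)
    (T : ℝ) (hT : 1 < T) :
    ∃ C > (0:ℝ), ∀ (a : ℤ → ℝ) (N : ℤ),
      (∀ k, 0 ≤ a k) → Antitone a → BddAbove (Set.range a) → (∀ k, N ≤ k → a k = 0) →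
      ∑' k : ℤ, a k ^ (((n : ℝ) - 2 * s) / n) * T ^ k ≤
        C * ∑' k : {k : ℤ // a k ≠ 0},
              a ((k : ℤ) + 1) * a (k : ℤ) ^ (-(2 * s / (n : ℝ))) * T ^ (k : ℤ) :=
  summability_lemma_general n hn s hsn T hT
end

section
/- Let n ≥ 1 and s ∈ (0,1). Let f ∈ L^∞(ℝⁿ) be compactly supported, and for each k ∈ ℤ set a_k := |{x ∈ ℝⁿ : |f(x)| > 2^k}|. Then ∫_{ℝⁿ}∫_{ℝⁿ} |f(x)−f(y)|²/|x−y|^{n+2s} dx dy ≥ c(n,s) Σ_{k∈ℤ, a_k≠0} a_{k+1} a_k^{−2s/n} 2^{2k}, for a suitable constant c(n,s) > 0 depending only on n and s. -/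
open MeasureTheory Set Metric Function
open scoped ENNReal

/-! Write `A k = {|f| > 2 ^ k}`. If `x ∈ A (k + 1)` and `y ∉ A k` then `|f x - f y| > 2 ^ k`,
so for a fixed pair `(x, y)` only the `k` with `2 ^ k < |f x - f y|` contribute to
`∑ₖ 4 ^ k 1_{A (k+1) × (A k)ᶜ}`, which is therefore at most `(4 / 3) |f x - f y| ^ 2`. For the
`k`-th term, a ball around `x` of volume `2 |A k|` (radius `≍ |A k| ^ (1 / n)`) meets `(A k)ᶜ` in
measure `≥ |A k|`, and there the kernel is at least `radius ^ (-(n + 2 s))`; integrating over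
`x ∈ A (k + 1)` gives `|A (k + 1)| |A k| ^ (-2 s / n) 4 ^ k` up to a dimensional constant. -/

lemma tsum_ite_le_ofReal_four_zpow (m : ℤ) :
    ∑' k : ℤ, (if k ≤ m then ENNReal.ofReal (4 ^ k) else 0) = ENNReal.ofReal (4 / 3 * 4 ^ m) := by
  have hreindex : ∑' k : ℤ, (if k ≤ m then ENNReal.ofReal (4 ^ k) else 0) =
      ∑' j : ℕ, (if m - j ≤ m then ENNReal.ofReal (4 ^ (m - j)) else 0) := by
    refine (Function.Injective.tsum_eq (g := fun j : ℕ => m - j) (fun i j h => by simpa using h)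
      fun k hk => ⟨(m - k).toNat, ?_⟩).symm
    have : k ≤ m := by by_contra h; simp [h] at hk
    simp only; omega
  have hterm (j : ℕ) : ENNReal.ofReal ((4 : ℝ) ^ (m - j)) = ENNReal.ofReal (4 ^ m) * 4⁻¹ ^ j := by
    rw [zpow_sub₀ (by norm_num), zpow_natCast, div_eq_mul_inv, ← inv_pow,
      ENNReal.ofReal_mul (by positivity), ENNReal.ofReal_pow (by norm_num),
      ENNReal.ofReal_inv_of_pos (by norm_num)]
    norm_num
  have hgeom : (1 - 4⁻¹ : ℝ≥0∞)⁻¹ = ENNReal.ofReal (4 / 3) := by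
    rw [← ENNReal.ofReal_ofNat 4, ← ENNReal.ofReal_inv_of_pos (by norm_num), ← ENNReal.ofReal_one,
      ← ENNReal.ofReal_sub _ (by norm_num), ← ENNReal.ofReal_inv_of_pos (by norm_num)]
    norm_num
  simp only [hreindex, show ∀ j : ℕ, m - j ≤ m by omega, if_true, hterm]
  rw [ENNReal.tsum_mul_left, ENNReal.tsum_geometric, hgeom, ← ENNReal.ofReal_mul (by positivity),
    mul_comm]

lemma tsum_ite_two_zpow_lt_le (d : ℝ) :
    ∑' k : ℤ, (if (2 : ℝ) ^ k < d then ENNReal.ofReal (4 ^ k) else 0) ≤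
      ENNReal.ofReal (4 / 3 * d ^ 2) := by
  rcases le_or_gt d 0 with hd | hd
  · simp [fun k : ℤ => (hd.trans (zpow_pos two_pos k).le).not_gt]
  set m := Int.log 2 d
  have hm : (2 : ℝ) ^ m ≤ d := mod_cast Int.zpow_log_le_self (b := 2) one_lt_two hd
  have hk_le (k : ℤ) (hk : (2 : ℝ) ^ k < d) : k ≤ m := by
    have : (2 : ℝ) ^ k < 2 ^ (m + 1) :=
      hk.trans (mod_cast Int.lt_zpow_succ_log_self (b := 2) one_lt_two d)
    have := (zpow_lt_zpow_iff_right₀ one_lt_two).mp this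
    omega
  calc ∑' k : ℤ, (if (2 : ℝ) ^ k < d then ENNReal.ofReal (4 ^ k) else 0)
      ≤ ∑' k : ℤ, (if k ≤ m then ENNReal.ofReal (4 ^ k) else 0) := by
        refine ENNReal.tsum_le_tsum fun k => ?_
        by_cases h : (2 : ℝ) ^ k < d
        · simp [h, hk_le k h]
        · simp [h]
    _ = ENNReal.ofReal (4 / 3 * 4 ^ m) := tsum_ite_le_ofReal_four_zpow m
    _ ≤ ENNReal.ofReal (4 / 3 * d ^ 2) := by
        gcongr
        calc (4 : ℝ) ^ m = (2 ^ m) ^ 2 := by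
              rw [← zpow_natCast, ← zpow_mul, mul_comm, zpow_mul]; norm_num
          _ ≤ d ^ 2 := by gcongr

def dyadicSuperlevelSet {X : Type*} (f : X → ℝ) (k : ℤ) : Set X := {x | (2 : ℝ) ^ k < |f x|}

section

variable {X : Type*} {f : X → ℝ}

lemma two_zpow_lt_abs_sub {k : ℤ} {x y : X} (hx : x ∈ dyadicSuperlevelSet f (k + 1))
    (hy : y ∉ dyadicSuperlevelSet f k) : (2 : ℝ) ^ k < |f x - f y| := by
  have hx' : 2 ^ k * 2 < |f x| := by rw [← zpow_add_one₀ two_ne_zero]; exact hx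
  have hy' : |f y| ≤ 2 ^ k := not_lt.mp hy
  linarith [abs_sub_abs_le_abs_sub (f x) (f y), zpow_pos (two_pos (α := ℝ)) k]

lemma tsum_indicator_dyadicSuperlevelSet_le (f : X → ℝ) (x y : X) :
    ∑' k : ℤ, (dyadicSuperlevelSet f (k + 1) ×ˢ (dyadicSuperlevelSet f k)ᶜ).indicator
        (fun _ => ENNReal.ofReal (4 ^ k)) (x, y) ≤ ENNReal.ofReal (4 / 3 * |f x - f y| ^ 2) := by
  refine le_trans (ENNReal.tsum_le_tsum fun k => ?_) (tsum_ite_two_zpow_lt_le _)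
  by_cases hxy : (x, y) ∈ dyadicSuperlevelSet f (k + 1) ×ˢ (dyadicSuperlevelSet f k)ᶜ
  · rw [indicator_of_mem hxy, if_pos (two_zpow_lt_abs_sub hxy.1 hxy.2)]
  · rw [indicator_of_notMem hxy]
    exact zero_le

lemma dyadicSuperlevelSet_subset_support (f : X → ℝ) (k : ℤ) :
    dyadicSuperlevelSet f k ⊆ support f := fun x hx h0 => by
  have : (2 : ℝ) ^ k < |f x| := hx
  rw [h0, abs_zero] at this
  exact (zpow_pos two_pos k).not_gt this

lemma HasCompactSupport.measure_dyadicSuperlevelSet_ne_top [TopologicalSpace X]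
    [MeasurableSpace X] {μ : Measure X} [IsFiniteMeasureOnCompacts μ] (hf : HasCompactSupport f)
    (k : ℤ) : μ (dyadicSuperlevelSet f k) ≠ ∞ :=
  ((measure_mono ((dyadicSuperlevelSet_subset_support f k).trans (subset_tsupport f))).trans_lt
    hf.measure_lt_top).ne

variable [MeasurableSpace X] {μ : Measure X}

lemma Measurable.measurableSet_dyadicSuperlevelSet (hf : Measurable f) (k : ℤ) :
    MeasurableSet (dyadicSuperlevelSet f k) :=
  measurableSet_lt measurable_const hf.abs

lemma lintegral_lintegral_indicator_prod_mul {B C : Set X} (hB : MeasurableSet B)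
    (hC : MeasurableSet C) {c : ℝ≥0∞} (hc : c ≠ ∞) (K : X → X → ℝ≥0∞) :
    ∫⁻ x, ∫⁻ y, (B ×ˢ C).indicator (fun _ => c) (x, y) * K x y ∂μ ∂μ =
      c * ∫⁻ x in B, ∫⁻ y in C, K x y ∂μ ∂μ := by
  have hinner (x : X) : ∫⁻ y, (B ×ˢ C).indicator (fun _ => c) (x, y) * K x y ∂μ =
      B.indicator (fun x => c * ∫⁻ y in C, K x y ∂μ) x := by
    by_cases hx : x ∈ B
    · rw [indicator_of_mem hx, ← lintegral_const_mul' _ _ hc, ← lintegral_indicator hC]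
      congr with y
      by_cases hy : y ∈ C <;> simp [hx, hy]
    · simp [hx]
  simp_rw [hinner, lintegral_indicator hB, lintegral_const_mul' _ _ hc]

lemma tsum_lintegral_lintegral [SFinite μ] {ι : Type*} [Countable ι] {G : ι → X → X → ℝ≥0∞}
    (hG : ∀ i, Measurable (uncurry (G i))) :
    ∑' i, ∫⁻ x, ∫⁻ y, G i x y ∂μ ∂μ = ∫⁻ x, ∫⁻ y, ∑' i, G i x y ∂μ ∂μ := by
  have hGx (i : ι) : Measurable fun x => ∫⁻ y, G i x y ∂μ := (hG i).lintegral_prod_right'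
  rw [← lintegral_tsum fun i => (hGx i).aemeasurable]
  exact lintegral_congr fun x =>
    (lintegral_tsum fun i => ((hG i).comp measurable_prodMk_left).aemeasurable).symm

lemma tsum_four_zpow_mul_lintegral_dyadicSuperlevelSet_le [SFinite μ] (hf : Measurable f)
    {K : X → X → ℝ≥0∞} (hK : Measurable (uncurry K)) :
    ∑' k : ℤ, ENNReal.ofReal (4 ^ k) *
        ∫⁻ x in dyadicSuperlevelSet f (k + 1), ∫⁻ y in (dyadicSuperlevelSet f k)ᶜ, K x y ∂μ ∂μ ≤
      ENNReal.ofReal (4 / 3) * ∫⁻ x, ∫⁻ y, ENNReal.ofReal (|f x - f y| ^ 2) * K x y ∂μ ∂μ := by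
  have hS := hf.measurableSet_dyadicSuperlevelSet
  calc _ = ∑' k : ℤ, ∫⁻ x, ∫⁻ y,
          (dyadicSuperlevelSet f (k + 1) ×ˢ (dyadicSuperlevelSet f k)ᶜ).indicator
            (fun _ => ENNReal.ofReal (4 ^ k)) (x, y) * K x y ∂μ ∂μ := by
        simp_rw [lintegral_lintegral_indicator_prod_mul (hS _) (hS _).compl ENNReal.ofReal_ne_top]
    _ = ∫⁻ x, ∫⁻ y, ∑' k : ℤ,
          (dyadicSuperlevelSet f (k + 1) ×ˢ (dyadicSuperlevelSet f k)ᶜ).indicator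
            (fun _ => ENNReal.ofReal (4 ^ k)) (x, y) * K x y ∂μ ∂μ :=
        tsum_lintegral_lintegral fun k =>
          (measurable_const.indicator ((hS _).prod (hS _).compl)).mul hK
    _ ≤ ∫⁻ x, ∫⁻ y, ENNReal.ofReal (4 / 3 * |f x - f y| ^ 2) * K x y ∂μ ∂μ := by
        gcongr with x y
        rw [ENNReal.tsum_mul_right]
        gcongr
        exact tsum_indicator_dyadicSuperlevelSet_le f x y
    _ = _ := by
        simp_rw [ENNReal.ofReal_mul (by norm_num : (0 : ℝ) ≤ 4 / 3), mul_assoc,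
          lintegral_const_mul' _ _ ENNReal.ofReal_ne_top]

end

lemma ofReal_rpow_inv_mul_sub_le_setLIntegral_compl {E : Type*} [NormedAddCommGroup E]
    [MeasurableSpace E] [OpensMeasurableSpace E] (μ : Measure E) [NullSingletonClass μ] {A : Set E}
    (hA : MeasurableSet A) (x : E) {p : ℝ} (hp : 0 ≤ p) (R : ℝ) :
    ENNReal.ofReal ((R ^ p)⁻¹) * (μ (ball x R) - μ A) ≤
      ∫⁻ y in Aᶜ, ENNReal.ofReal ((‖x - y‖ ^ p)⁻¹) ∂μ := by
  -- the kernel is `0⁻¹ = 0` at `y = x`, so the centre has to be discarded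
  set S := (ball x R \ A) \ {x}
  have hS : MeasurableSet S := (measurableSet_ball.diff hA).diff (measurableSet_singleton x)
  calc ENNReal.ofReal ((R ^ p)⁻¹) * (μ (ball x R) - μ A)
      ≤ ENNReal.ofReal ((R ^ p)⁻¹) * μ S := by
        rw [measure_sdiff_null (measure_singleton x)]
        gcongr
        exact le_measure_sdiff
    _ = ∫⁻ _ in S, ENNReal.ofReal ((R ^ p)⁻¹) ∂μ := (setLIntegral_const _ _).symm
    _ ≤ ∫⁻ y in S, ENNReal.ofReal ((‖x - y‖ ^ p)⁻¹) ∂μ := by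
        refine setLIntegral_mono' hS fun y ⟨⟨hyR, _⟩, hyx⟩ => ?_
        have hxy : 0 < ‖x - y‖ := norm_pos_iff.mpr (sub_ne_zero.mpr (Ne.symm hyx))
        have : ‖x - y‖ < R := by rwa [← dist_eq_norm, dist_comm]
        gcongr
    _ ≤ ∫⁻ y in Aᶜ, ENNReal.ofReal ((‖x - y‖ ^ p)⁻¹) ∂μ :=
        lintegral_mono_set fun y hy => hy.1.2

section AddHaar

variable {E : Type*} [NormedAddCommGroup E] [NormedSpace ℝ E] [MeasurableSpace E] [BorelSpace E]
  [FiniteDimensional ℝ E] [Nontrivial E] (μ : Measure E) [μ.IsAddHaarMeasure]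

lemma addHaar_ball_rpow_inv_finrank (x : E) {t : ℝ} (ht : 0 ≤ t) :
    μ (ball x ((t / (μ (ball 0 1)).toReal) ^ ((Module.finrank ℝ E : ℝ)⁻¹))) = ENNReal.ofReal t := by
  have hω : 0 < (μ (ball (0 : E) 1)).toReal :=
    ENNReal.toReal_pos (measure_ball_pos μ _ one_pos).ne' measure_ball_lt_top.ne
  rw [Measure.addHaar_ball μ x (by positivity), Real.rpow_inv_natCast_pow (by positivity)
    Module.finrank_pos.ne']
  nth_rw 2 [← ENNReal.ofReal_toReal (measure_ball_lt_top (μ := μ) (x := 0) (r := 1)).ne]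
  rw [← ENNReal.ofReal_mul (by positivity), div_mul_cancel₀ _ hω.ne']

lemma measure_mul_le_lintegral_lintegral_compl {A : Set E} (hA : MeasurableSet A) (hA0 : μ A ≠ 0)
    (hA_top : μ A ≠ ∞) (B : Set E) {p : ℝ} (hp : 0 ≤ p) :
    μ B * ENNReal.ofReal ((2 / (μ (ball 0 1)).toReal) ^ (-(p / (Module.finrank ℝ E : ℝ))) *
        (μ A).toReal ^ (1 - p / (Module.finrank ℝ E : ℝ))) ≤
      ∫⁻ x in B, ∫⁻ y in Aᶜ, ENNReal.ofReal ((‖x - y‖ ^ p)⁻¹) ∂μ ∂μ := by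
  set ω := (μ (ball (0 : E) 1)).toReal
  set d : ℝ := (Module.finrank ℝ E : ℝ)
  set a := (μ A).toReal
  have hω : 0 < ω := ENNReal.toReal_pos (measure_ball_pos μ _ one_pos).ne' measure_ball_lt_top.ne
  have ha : 0 < a := ENNReal.toReal_pos hA0 hA_top
  set R := (2 * a / ω) ^ d⁻¹
  have hR : (R ^ p)⁻¹ = (2 / ω) ^ (-(p / d)) * a ^ (-(p / d)) := by
    rw [← Real.rpow_mul (by positivity), ← Real.rpow_neg (by positivity), inv_mul_eq_div,
      mul_div_right_comm, Real.mul_rpow (by positivity) ha.le]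
  have hconst : (2 / ω) ^ (-(p / d)) * a ^ (1 - p / d) = (R ^ p)⁻¹ * a := by
    rw [hR, mul_assoc, ← Real.rpow_add_one ha.ne', neg_add_eq_sub]
  have hgap (x : E) : μ (ball x R) - μ A = ENNReal.ofReal a := by
    rw [addHaar_ball_rpow_inv_finrank μ x (by positivity), two_mul, ENNReal.ofReal_add ha.le ha.le,
      ENNReal.ofReal_toReal hA_top, ENNReal.add_sub_cancel_right hA_top]
  rw [hconst, mul_comm, ← setLIntegral_const]
  refine lintegral_mono fun x => ?_
  rw [ENNReal.ofReal_mul (by positivity), ← hgap x]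
  exact ofReal_rpow_inv_mul_sub_le_setLIntegral_compl μ hA x hp R

lemma ofReal_level_term_le_lintegral_compl {f : E → ℝ} (hf : Measurable f) {k : ℤ}
    (hk : μ (dyadicSuperlevelSet f k) ≠ 0) (hk_top : μ (dyadicSuperlevelSet f k) ≠ ∞)
    (hk1_top : μ (dyadicSuperlevelSet f (k + 1)) ≠ ∞) {s : ℝ} (hs : 0 ≤ s) :
    ENNReal.ofReal ((2 / (μ (ball 0 1)).toReal) ^
          (-((Module.finrank ℝ E + 2 * s) / Module.finrank ℝ E)) *
        ((μ (dyadicSuperlevelSet f (k + 1))).toReal *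
          (μ (dyadicSuperlevelSet f k)).toReal ^ (-(2 * s / Module.finrank ℝ E)) * 2 ^ (2 * k))) ≤
      ENNReal.ofReal (4 ^ k) * ∫⁻ x in dyadicSuperlevelSet f (k + 1),
        ∫⁻ y in (dyadicSuperlevelSet f k)ᶜ,
          ENNReal.ofReal ((‖x - y‖ ^ ((Module.finrank ℝ E : ℝ) + 2 * s))⁻¹) ∂μ ∂μ := by
  set d : ℝ := (Module.finrank ℝ E : ℝ) with hd_def
  have hd : 0 < d := Nat.cast_pos.mpr Module.finrank_pos
  have h := measure_mul_le_lintegral_lintegral_compl μ (hf.measurableSet_dyadicSuperlevelSet k) hk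
    hk_top (dyadicSuperlevelSet f (k + 1)) (by positivity : 0 ≤ d + 2 * s)
  rw [← ENNReal.ofReal_toReal hk1_top, ← ENNReal.ofReal_mul ENNReal.toReal_nonneg, ← hd_def] at h
  refine le_trans (le_of_eq ?_) (mul_le_mul_right h _)
  rw [← ENNReal.ofReal_mul (by positivity)]
  have hexp : 1 - (d + 2 * s) / d = -(2 * s / d) := by field_simp; ring
  have h4 : (2 : ℝ) ^ (2 * k) = 4 ^ k := by rw [zpow_mul]; norm_num
  rw [hexp, h4]
  ring_nf

end AddHaar

/-- For `f ∈ L^∞(ℝⁿ)` compactly supported, with `a_k := |{|f| > 2^k}|`,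
the Gagliardo energy controls `Σ_{a_k ≠ 0} a_{k+1} a_k^{-2s/n} 2^{2k}` from above. -/
theorem gagliardo_ge_level_sum (n : ℕ) (hn : 1 ≤ n) (s : ℝ) (hs : s ∈ Ioo (0:ℝ) 1) :
    ∃ c > (0:ℝ), ∀ f : EuclideanSpace ℝ (Fin n) → ℝ,
      Measurable f → eLpNorm f ⊤ volume < ⊤ → HasCompactSupport f →
      ∀ a : ℤ → ℝ,
        (∀ k : ℤ, a k = (volume {x | (2:ℝ) ^ k < |f x|}).toReal) →
        ENNReal.ofReal c *
            ∑' k : {k : ℤ // a k ≠ 0},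
              ENNReal.ofReal
                (a ((k : ℤ) + 1) * a (k : ℤ) ^ (-(2 * s / (n : ℝ))) * (2:ℝ) ^ (2 * (k : ℤ))) ≤
          ∫⁻ x, ∫⁻ y, ENNReal.ofReal (|f x - f y| ^ 2 / ‖x - y‖ ^ ((n : ℝ) + 2 * s)) := by
  have : NeZero n := ⟨by omega⟩
  set ω := (volume (ball (0 : EuclideanSpace ℝ (Fin n)) 1)).toReal
  have hω : 0 < ω := ENNReal.toReal_pos (measure_ball_pos _ _ one_pos).ne' measure_ball_lt_top.ne
  set C := (2 / ω) ^ (-((n + 2 * s) / n))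
  refine ⟨3 / 4 * C, by positivity, fun f hf _ hsupp a ha => ?_⟩
  set K : EuclideanSpace ℝ (Fin n) → EuclideanSpace ℝ (Fin n) → ℝ≥0∞ :=
    fun x y => ENNReal.ofReal ((‖x - y‖ ^ ((n : ℝ) + 2 * s))⁻¹)
  have hlevel (k : {k : ℤ // a k ≠ 0}) : ENNReal.ofReal (C * (a (k + 1) * a k ^ (-(2 * s / n)) *
      2 ^ (2 * (k : ℤ)))) ≤ ENNReal.ofReal (4 ^ (k : ℤ)) * ∫⁻ x in dyadicSuperlevelSet f (k + 1),
        ∫⁻ y in (dyadicSuperlevelSet f k)ᶜ, K x y := by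
    have hA (j : ℤ) : a j = (volume (dyadicSuperlevelSet f j)).toReal := ha j
    have hk : volume (dyadicSuperlevelSet f k) ≠ 0 := (ENNReal.toReal_ne_zero.mp (hA k ▸ k.2)).1
    have h := ofReal_level_term_le_lintegral_compl volume hf hk
      (hsupp.measure_dyadicSuperlevelSet_ne_top k) (hsupp.measure_dyadicSuperlevelSet_ne_top _)
      hs.1.le
    rw [finrank_euclideanSpace_fin] at h
    rwa [hA, hA]
  calc _ = ENNReal.ofReal (3 / 4) * ∑' k : {k : ℤ // a k ≠ 0},
        ENNReal.ofReal (C * (a (k + 1) * a k ^ (-(2 * s / n)) * 2 ^ (2 * (k : ℤ)))) := by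
        simp_rw [ENNReal.ofReal_mul (by positivity : (0 : ℝ) ≤ 3 / 4), mul_assoc,
          ← ENNReal.tsum_mul_left, ENNReal.ofReal_mul (by positivity : 0 ≤ C)]
    _ ≤ ENNReal.ofReal (3 / 4) * ∑' k : ℤ, ENNReal.ofReal (4 ^ k) *
          ∫⁻ x in dyadicSuperlevelSet f (k + 1), ∫⁻ y in (dyadicSuperlevelSet f k)ᶜ, K x y := by
        gcongr
        exact (ENNReal.tsum_le_tsum hlevel).trans
          (ENNReal.tsum_comp_le_tsum_of_injective Subtype.val_injective _)
    _ ≤ ENNReal.ofReal (3 / 4) * (ENNReal.ofReal (4 / 3) *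
          ∫⁻ x, ∫⁻ y, ENNReal.ofReal (|f x - f y| ^ 2) * K x y) := by
        gcongr
        exact tsum_four_zpow_mul_lintegral_dyadicSuperlevelSet_le hf (by unfold K; fun_prop)
    _ = _ := by
        rw [← mul_assoc, ← ENNReal.ofReal_mul (by norm_num),
          show (3 / 4 : ℝ) * (4 / 3) = 1 by norm_num, ENNReal.ofReal_one, one_mul]
        refine lintegral_congr fun x => lintegral_congr fun y => ?_
        rw [div_eq_mul_inv, ENNReal.ofReal_mul (by positivity)]
end

section
/- Let W : [−1,1] → [0,∞) satisfy W ∈ C²([−1,1]), W(±1) = 0, W > 0 on (−1,1), W′(±1) = 0 and W″(±1) > 0. Then there exists a small constant c > 0 such that: (i) W(t) ≥ W(r) + c(1+r)(t−r) + c(t−r)² whenever −1 ≤ r ≤ t ≤ −1 + c; and (ii) W(r) − W(t) ≤ (1+r)/c whenever −1 ≤ r ≤ t ≤ 1. -/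
open Set

/-- Growth properties of a double-well potential near `-1`. -/
theorem double_well_growth (W W' W'' : ℝ → ℝ)
    (hWnonneg : ∀ t ∈ Icc (-1:ℝ) 1, 0 ≤ W t)
    (hW' : ∀ t ∈ Icc (-1:ℝ) 1, HasDerivWithinAt W (W' t) (Icc (-1) 1) t)
    (hW'' : ∀ t ∈ Icc (-1:ℝ) 1, HasDerivWithinAt W' (W'' t) (Icc (-1) 1) t)
    (hW''cont : ContinuousOn W'' (Icc (-1) 1))
    (hWm : W (-1) = 0) (hWp : W 1 = 0)
    (hWpos : ∀ t ∈ Ioo (-1:ℝ) 1, 0 < W t)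
    (hW'm : W' (-1) = 0) (hW'p : W' 1 = 0)
    (hW''m : 0 < W'' (-1)) (hW''p : 0 < W'' 1) :
    ∃ c > (0:ℝ),
      (∀ r t : ℝ, -1 ≤ r → r ≤ t → t ≤ -1 + c →
        W r + c * (1 + r) * (t - r) + c * (t - r) ^ 2 ≤ W t) ∧
      (∀ r t : ℝ, -1 ≤ r → r ≤ t → t ≤ 1 → W r - W t ≤ (1 + r) / c) := by
  set m := W'' (-1) with hm
  have hIcc : ((-1:ℝ)) ∈ Icc (-1:ℝ) 1 := by constructor <;> norm_num
  -- bound on W''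
  obtain ⟨M₀, hM₀⟩ := (isCompact_Icc (a := (-1:ℝ)) (b := 1)).exists_bound_of_continuousOn hW''cont
  set M := max M₀ 1 with hMdef
  have hM1 : (1:ℝ) ≤ M := le_max_right _ _
  have hMpos : (0:ℝ) < M := lt_of_lt_of_le one_pos hM1
  have hMbd : ∀ x ∈ Icc (-1:ℝ) 1, ‖W'' x‖ ≤ M := fun x hx =>
    (hM₀ x hx).trans (le_max_left _ _)
  -- W' is M-Lipschitz on Icc, so |W' s| ≤ M (1+s)
  have hW'bd : ∀ s ∈ Icc (-1:ℝ) 1, |W' s| ≤ M * (1 + s) := by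
    intro s hs
    have := (convex_Icc (-1:ℝ) 1).norm_image_sub_le_of_norm_hasDerivWithin_le
      hW'' hMbd hIcc hs
    rw [hW'm] at this
    simp only [Real.norm_eq_abs, sub_zero] at this
    have habs : |s - (-1)| = 1 + s := by
      rw [abs_of_nonneg (by linarith [hs.1])]; ring
    rw [habs] at this; linarith [this]
  -- hence W r ≤ 2 M (1+r)
  have hWbd : ∀ r ∈ Icc (-1:ℝ) 1, W r ≤ 2 * M * (1 + r) := by
    intro r hr
    have hsub : Icc (-1:ℝ) r ⊆ Icc (-1:ℝ) 1 := Icc_subset_Icc le_rfl hr.2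
    have hlip := (convex_Icc (-1:ℝ) r).norm_image_sub_le_of_norm_hasDerivWithin_le
      (f := W) (f' := W') (C := M * (1 + r))
      (fun x hx => (hW' x (hsub hx)).mono hsub)
      (fun x hx => by
        have := hW'bd x (hsub hx)
        have h1x : (1:ℝ) + x ≤ 1 + r := by linarith [hx.2]
        calc ‖W' x‖ = |W' x| := rfl
          _ ≤ M * (1 + x) := this
          _ ≤ M * (1 + r) := by nlinarith)
      (left_mem_Icc.2 hr.1) (right_mem_Icc.2 hr.1)
    rw [hWm] at hlip
    simp only [Real.norm_eq_abs, sub_zero] at hlip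
    have habs : |r - (-1)| = 1 + r := by
      rw [abs_of_nonneg (by linarith [hr.1])]; ring
    rw [habs] at hlip
    have h2 : (1:ℝ) + r ≤ 2 := by linarith [hr.2]
    have hle := le_of_abs_le hlip
    have h1r : (0:ℝ) ≤ 1 + r := by linarith [hr.1]
    have hkey : M * (1 + r) * (1 + r) ≤ M * (1 + r) * 2 :=
      mul_le_mul_of_nonneg_left h2 (mul_nonneg hMpos.le h1r)
    nlinarith [hle, hkey]
  -- continuity of W'' at -1 gives δ₀ with W'' ≥ m/2 near -1
  have hcw : ContinuousWithinAt W'' (Icc (-1:ℝ) 1) (-1) := hW''cont _ hIcc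
  rw [Metric.continuousWithinAt_iff] at hcw
  obtain ⟨δ, hδpos, hδ⟩ := hcw (m/2) (by positivity)
  set δ₀ : ℝ := min (δ/2) 1 with hδ₀def
  have hδ₀pos : 0 < δ₀ := lt_min (by positivity) one_pos
  have hδ₀1 : δ₀ ≤ 1 := min_le_right _ _
  have hsubD : Icc (-1:ℝ) (-1 + δ₀) ⊆ Icc (-1:ℝ) 1 :=
    Icc_subset_Icc le_rfl (by linarith)
  have hW''ge : ∀ x ∈ Icc (-1:ℝ) (-1 + δ₀), m/2 ≤ W'' x := by
    intro x hx
    have hx1 : x ∈ Icc (-1:ℝ) 1 := hsubD hx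
    have hd : dist x (-1) < δ := by
      rw [Real.dist_eq]
      have : |x - (-1)| = x + 1 := by
        rw [abs_of_nonneg (by linarith [hx.1])]; ring
      rw [this]
      have := hx.2
      have : x + 1 ≤ δ₀ := by linarith
      have hδ2 : δ₀ ≤ δ/2 := min_le_left _ _
      linarith
    have := hδ hx1 hd
    rw [Real.dist_eq] at this
    have := abs_lt.1 this
    linarith [this.1]
  -- W' s ≥ (m/2)(1+s) on Icc (-1) (-1+δ₀)
  have hW'ge : ∀ s ∈ Icc (-1:ℝ) (-1 + δ₀), m/2 * (1 + s) ≤ W' s := by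
    intro s hs
    set g : ℝ → ℝ := fun x => W' x - m/2 * (1 + x) with hg
    have hmono : MonotoneOn g (Icc (-1:ℝ) (-1 + δ₀)) := by
      apply monotoneOn_of_hasDerivWithinAt_nonneg (f' := fun x => W'' x - m/2)
        (convex_Icc _ _)
      · apply ContinuousOn.sub
        · exact fun x hx => ((hW'' x (hsubD hx)).continuousWithinAt).mono hsubD
        · fun_prop
      · intro x hx
        have hx' : x ∈ Icc (-1:ℝ) (-1 + δ₀) := interior_subset hx
        have hlin : HasDerivAt (fun y => m/2 * (1 + y)) (m/2) x := by
          have := ((hasDerivAt_id x).const_add (1:ℝ)).const_mul (m/2)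
          simpa using this
        exact ((hW'' x (hsubD hx')).mono (interior_subset.trans hsubD)).sub
          hlin.hasDerivWithinAt
      · intro x hx
        have hx' : x ∈ Icc (-1:ℝ) (-1 + δ₀) := interior_subset hx
        linarith [hW''ge x hx']
    have h0 : g (-1) = 0 := by simp [hg, hW'm]
    have := hmono (left_mem_Icc.2 (by linarith)) hs hs.1
    rw [h0] at this
    simp only [hg] at this
    linarith
  -- choose c
  refine ⟨min (min δ₀ (m/8)) (1/(2*M)), ?_, ?_, ?_⟩
  · have : (0:ℝ) < m/8 := by positivity
    exact lt_min (lt_min hδ₀pos this) (by positivity)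
  · -- part (i)
    intro r t hr hrt ht
    set c : ℝ := min (min δ₀ (m/8)) (1/(2*M)) with hc
    have hcδ : c ≤ δ₀ := (min_le_left _ _).trans (min_le_left _ _)
    have hcm : c ≤ m/8 := (min_le_left _ _).trans (min_le_right _ _)
    have hcpos : 0 < c := lt_min (lt_min hδ₀pos (by positivity)) (by positivity)
    have htD : t ≤ -1 + δ₀ := by linarith
    have hsubE : Icc r t ⊆ Icc (-1:ℝ) (-1 + δ₀) := Icc_subset_Icc hr htD
    set h : ℝ → ℝ := fun x => W x - c * (1 + r) * (x - r) - c * (x - r)^2 with hhdef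
    have hmono : MonotoneOn h (Icc r t) := by
      apply monotoneOn_of_hasDerivWithinAt_nonneg
        (f' := fun x => W' x - c * (1 + r) - 2 * c * (x - r)) (convex_Icc _ _)
      · apply ContinuousOn.sub
        apply ContinuousOn.sub
        · exact fun x hx => ((hW' x (hsubD (hsubE hx))).continuousWithinAt).mono
            (hsubE.trans hsubD)
        · fun_prop
        · fun_prop
      · intro x hx
        have hx' : x ∈ Icc r t := interior_subset hx
        have h1 : HasDerivWithinAt W (W' x) (interior (Icc r t)) x :=
          (hW' x (hsubD (hsubE hx'))).mono (interior_subset.trans (hsubE.trans hsubD))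
        have h2 : HasDerivWithinAt (fun x => c * (1 + r) * (x - r)) (c * (1 + r))
            (interior (Icc r t)) x := by
          simpa using (((hasDerivAt_id x).sub_const r).const_mul
            (c * (1 + r))).hasDerivWithinAt (s := interior (Icc r t))
        have h3 : HasDerivWithinAt (fun x => c * (x - r)^2) (2 * c * (x - r))
            (interior (Icc r t)) x := by
          have h3' := (((hasDerivAt_id x).sub_const r).pow 2).const_mul c
          exact (h3'.hasDerivWithinAt (s := interior (Icc r t))).congr_deriv
            (by simp only [id_eq]; ring)
        exact (h1.sub h2).sub h3
      · intro x hx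
        have hx' : x ∈ Icc r t := interior_subset hx
        have hxD : x ∈ Icc (-1:ℝ) (-1 + δ₀) := hsubE hx'
        have := hW'ge x hxD
        have h1r : (0:ℝ) ≤ 1 + r := by linarith
        have hxr : (0:ℝ) ≤ x - r := by linarith [hx'.1]
        have hm8 : 0 < m := hW''m
        nlinarith
    have := hmono (left_mem_Icc.2 hrt) (right_mem_Icc.2 hrt) hrt
    simp only [hhdef] at this
    have hrr : W r - c * (1 + r) * (r - r) - c * (r - r)^2 = W r := by ring
    rw [hrr] at this
    linarith
  · -- part (ii)
    intro r t hr hrt ht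
    set c : ℝ := min (min δ₀ (m/8)) (1/(2*M)) with hc
    have hcpos : 0 < c := lt_min (lt_min hδ₀pos (by positivity)) (by positivity)
    have hcM : c ≤ 1/(2*M) := min_le_right _ _
    have hrI : r ∈ Icc (-1:ℝ) 1 := ⟨hr, le_trans hrt ht⟩
    have htI : t ∈ Icc (-1:ℝ) 1 := ⟨le_trans hr hrt, ht⟩
    have h1 : W r ≤ 2 * M * (1 + r) := hWbd r hrI
    have h2 : 0 ≤ W t := hWnonneg t htI
    have h3 : 2 * M * (1 + r) ≤ (1 + r) / c := by
      rw [div_eq_mul_inv]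
      have hinv : 2 * M ≤ c⁻¹ := by
        rw [le_inv_comm₀ (by positivity) hcpos] at *
        calc c ≤ 1/(2*M) := hcM
          _ = (2*M)⁻¹ := by rw [one_div]
      have h1r : (0:ℝ) ≤ 1 + r := by linarith
      nlinarith
    linarith
end
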